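/- arXiv:2307.08780 — 3 statements merged into one kernel-verified Lean document; each statement's English description precedes it below -/
import Mathlib

section
/- For every choice function θ and all θ-NMDAs A and B over the same alphabet Σ, each of the following functions is computed by some θ-NMDA, both with respect to nonempty finite words and with respect to infinite words: w ↦ min(A(w), B(w)); w ↦ max(A(w), B(w)); w ↦ A(w) + B(w); w ↦ A(w) − B(w); w ↦ c · A(w) for any nonnegative rational c; and w ↦ −A(w). -/
/-- A nondeterministic discounted-sum automaton with multiple discount factors (NMDA)
over an alphabet `α` with states `Q`: a set of initial states, a complete transition
relation, a rational weight and a rational discount factor (greater than one) on every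
transition. -/
structure NMDA (α : Type) (Q : Type) where
  init : Set Q
  init_nonempty : init.Nonempty
  delta : Q → α → Q → Prop
  complete : ∀ q a, ∃ q', delta q a q'
  weight : Q → α → Q → ℚ
  disc : Q → α → Q → ℚ
  disc_gt_one : ∀ q a q', delta q a q' → 1 < disc q a q'

namespace NMDA

variable {α Q : Type}

/-- `r` is a run of `A` on the finite word consisting of the first `n` letters of `w`. -/
def FinRun (A : NMDA α Q) (w : ℕ → α) (n : ℕ) (r : ℕ → Q) : Prop :=
  r 0 ∈ A.init ∧ ∀ i < n, A.delta (r i) (w i) (r (i + 1))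

/-- `r` is a run of `A` on the infinite word `w`. -/
def InfRun (A : NMDA α Q) (w : ℕ → α) (r : ℕ → Q) : Prop :=
  r 0 ∈ A.init ∧ ∀ i, A.delta (r i) (w i) (r (i + 1))

/-- The (discounted-sum) value of the length-`n` prefix of the run `r` on the word `w`. -/
noncomputable def runVal (A : NMDA α Q) (w : ℕ → α) (r : ℕ → Q) (n : ℕ) : ℝ :=
  ∑ i ∈ Finset.range n,
    (A.weight (r i) (w i) (r (i + 1)) : ℝ) *
      ∏ j ∈ Finset.range i, (1 / (A.disc (r j) (w j) (r (j + 1)) : ℝ))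

/-- The (discounted-sum) value of the infinite run `r` on the infinite word `w`. -/
noncomputable def infRunVal (A : NMDA α Q) (w : ℕ → α) (r : ℕ → Q) : ℝ :=
  ∑' i : ℕ,
    (A.weight (r i) (w i) (r (i + 1)) : ℝ) *
      ∏ j ∈ Finset.range i, (1 / (A.disc (r j) (w j) (r (j + 1)) : ℝ))

/-- The value of `A` on the finite word given by the first `n` letters of `w`:
the infimum of the values of its runs on that word. -/
noncomputable def finVal (A : NMDA α Q) (w : ℕ → α) (n : ℕ) : ℝ :=
  sInf { x : ℝ | ∃ r : ℕ → Q, A.FinRun w n r ∧ x = A.runVal w r n }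

/-- The value of `A` on the infinite word `w`:
the infimum of the values of its runs on `w`. -/
noncomputable def infVal (A : NMDA α Q) (w : ℕ → α) : ℝ :=
  sInf { x : ℝ | ∃ r : ℕ → Q, A.InfRun w r ∧ x = A.infRunVal w r }

/-- An NMDA is integral if all its discount factors are integers. -/
def Integral (A : NMDA α Q) : Prop :=
  ∀ q a q', A.delta q a q' → ∃ k : ℤ, A.disc q a q' = (k : ℚ)

/-- An NMDA is deterministic (a DMDA) if it has a single initial state and at most one
transition from every state over every letter. -/
def Deterministic (A : NMDA α Q) : Prop :=
  (∃ q₀ : Q, A.init = {q₀}) ∧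
    ∀ q a q₁ q₂, A.delta q a q₁ → A.delta q a q₂ → q₁ = q₂

/-- A `l`-NDA: an NMDA whose discount factor is constantly `l` on all transitions. -/
def ConstDisc (A : NMDA α Q) (l : ℚ) : Prop :=
  ∀ q a q', A.delta q a q' → A.disc q a q' = l

/-- `A` is tidy with the choice function `θ`: the discount factor of the last transition
of every run on every nonempty finite word `u` equals `θ u`. -/
def TidyWith (A : NMDA α Q) (θ : List α → ℕ) : Prop :=
  ∀ (w : ℕ → α) (n : ℕ) (r : ℕ → Q), A.FinRun w (n + 1) r →
    A.disc (r n) (w n) (r (n + 1)) = (θ (List.ofFn fun i : Fin (n + 1) => w i.val) : ℚ)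

/-- A `θ`-NMDA: an integral NMDA that is tidy with the choice function `θ`. -/
def ThetaNMDA (A : NMDA α Q) (θ : List α → ℕ) : Prop :=
  A.Integral ∧ A.TidyWith θ

end NMDA

open Finset Filter

namespace NMDA

variable {α Q : Type}

lemma FinRun.mono {A : NMDA α Q} {w : ℕ → α} {n m : ℕ} {r : ℕ → Q}
    (h : A.FinRun w n r) (hm : m ≤ n) : A.FinRun w m r :=
  ⟨h.1, fun i hi => h.2 i (lt_of_lt_of_le hi hm)⟩

lemma InfRun.finRun {A : NMDA α Q} {w : ℕ → α} {r : ℕ → Q}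
    (h : A.InfRun w r) (n : ℕ) : A.FinRun w n r :=
  ⟨h.1, fun i _ => h.2 i⟩

lemma exists_extend (A : NMDA α Q) (w : ℕ → α) (n : ℕ) (r : ℕ → Q)
    (h : A.FinRun w n r) : ∃ r', A.InfRun w r' ∧ ∀ i ≤ n, r' i = r i := by
  classical
  let f : ℕ → Q := fun k =>
    Nat.rec (r 0) (fun i q => if i + 1 ≤ n then r (i + 1)
      else Classical.choose (A.complete q (w i))) k
  have hfs : ∀ i, f (i + 1) = if i + 1 ≤ n then r (i + 1)
      else Classical.choose (A.complete (f i) (w i)) := fun i => rfl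
  have hagree : ∀ i, i ≤ n → f i = r i := by
    intro i
    induction i with
    | zero => intro _; rfl
    | succ i ih => intro hi; rw [hfs, if_pos hi]
  refine ⟨f, ⟨?_, ?_⟩, hagree⟩
  · exact h.1
  · intro i
    by_cases hi : i + 1 ≤ n
    · rw [hagree i (by omega), hfs, if_pos hi]
      exact h.2 i (by omega)
    · rw [hfs, if_neg hi]
      exact Classical.choose_spec (A.complete (f i) (w i))

lemma exists_infRun (A : NMDA α Q) (w : ℕ → α) : ∃ r, A.InfRun w r := by
  obtain ⟨q0, hq0⟩ := A.init_nonempty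
  obtain ⟨r', hr', -⟩ := A.exists_extend w 0 (fun _ => q0) ⟨hq0, fun i hi => by omega⟩
  exact ⟨r', hr'⟩

lemma exists_finRun (A : NMDA α Q) (w : ℕ → α) (n : ℕ) : ∃ r, A.FinRun w n r := by
  obtain ⟨r, hr⟩ := A.exists_infRun w
  exact ⟨r, hr.finRun n⟩

lemma two_le_disc {A : NMDA α Q} (hI : A.Integral) {q : Q} {a : α} {q' : Q}
    (h : A.delta q a q') : (2 : ℚ) ≤ A.disc q a q' := by
  obtain ⟨k, hk⟩ := hI q a q' h
  have h1 := A.disc_gt_one q a q' h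
  rw [hk] at h1 ⊢
  have : (1 : ℤ) < k := by exact_mod_cast h1
  have : (2 : ℤ) ≤ k := by omega
  exact_mod_cast this

lemma prod_inv_disc_pos {A : NMDA α Q} (hI : A.Integral) {w : ℕ → α} {r : ℕ → Q} {i : ℕ}
    (hd : ∀ j < i, A.delta (r j) (w j) (r (j + 1))) :
    0 < ∏ j ∈ range i, (1 / (A.disc (r j) (w j) (r (j + 1)) : ℝ)) := by
  apply Finset.prod_pos
  intro j hj
  have h2 : (2 : ℚ) ≤ A.disc (r j) (w j) (r (j + 1)) := two_le_disc hI (hd j (mem_range.mp hj))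
  have : (0 : ℝ) < (A.disc (r j) (w j) (r (j + 1)) : ℝ) := by
    have : (2 : ℝ) ≤ (A.disc (r j) (w j) (r (j + 1)) : ℝ) := by exact_mod_cast h2
    linarith
  positivity

lemma prod_inv_disc_le {A : NMDA α Q} (hI : A.Integral) {w : ℕ → α} {r : ℕ → Q} {i : ℕ}
    (hd : ∀ j < i, A.delta (r j) (w j) (r (j + 1))) :
    ∏ j ∈ range i, (1 / (A.disc (r j) (w j) (r (j + 1)) : ℝ)) ≤ (2 : ℝ)⁻¹ ^ i := by
  calc ∏ j ∈ range i, (1 / (A.disc (r j) (w j) (r (j + 1)) : ℝ))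
      ≤ ∏ _j ∈ range i, (2 : ℝ)⁻¹ := by
        apply Finset.prod_le_prod
        · intro j hj
          have h2 : (2 : ℝ) ≤ (A.disc (r j) (w j) (r (j + 1)) : ℝ) := by
            exact_mod_cast two_le_disc hI (hd j (mem_range.mp hj))
          positivity
        · intro j hj
          have h2 : (2 : ℝ) ≤ (A.disc (r j) (w j) (r (j + 1)) : ℝ) := by
            exact_mod_cast two_le_disc hI (hd j (mem_range.mp hj))
          rw [one_div]
          exact inv_anti₀ (by norm_num) h2
    _ = (2 : ℝ)⁻¹ ^ i := by rw [Finset.prod_const, card_range]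

lemma exists_weight_bound [Finite Q] [Finite α] (A : NMDA α Q) :
    ∃ W : ℝ, 0 ≤ W ∧ ∀ q a q', |(A.weight q a q' : ℝ)| ≤ W := by
  obtain ⟨W, hW⟩ := (Set.finite_range
    (fun t : Q × α × Q => |(A.weight t.1 t.2.1 t.2.2 : ℝ)|)).bddAbove
  refine ⟨max W 0, le_max_right _ _, fun q a q' => ?_⟩
  exact le_trans (hW ⟨(q, a, q'), rfl⟩) (le_max_left _ _)

lemma sum_half_pow_le (n : ℕ) : ∑ i ∈ range n, (2 : ℝ)⁻¹ ^ i ≤ 2 := by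
  have hsum : Summable (fun i : ℕ => (2 : ℝ)⁻¹ ^ i) :=
    summable_geometric_of_lt_one (by norm_num) (by norm_num)
  have h := Summable.sum_le_tsum (range n) (fun i (_ : i ∉ range n) => by positivity) hsum
  calc ∑ i ∈ range n, (2 : ℝ)⁻¹ ^ i ≤ ∑' i : ℕ, (2 : ℝ)⁻¹ ^ i := h
    _ = 2 := by
        rw [tsum_geometric_of_lt_one (by norm_num) (by norm_num)]
        norm_num

lemma runVal_congr {A : NMDA α Q} {w : ℕ → α} {r r' : ℕ → Q} {n : ℕ}
    (h : ∀ i ≤ n, r' i = r i) : A.runVal w r' n = A.runVal w r n := by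
  unfold runVal
  apply Finset.sum_congr rfl
  intro i hi
  have hi' := mem_range.mp hi
  rw [h i (by omega), h (i + 1) (by omega)]
  congr 1
  apply Finset.prod_congr rfl
  intro j hj
  have hj' := mem_range.mp hj
  rw [h j (by omega), h (j + 1) (by omega)]

lemma runVal_abs_le {A : NMDA α Q} {W : ℝ} (hI : A.Integral)
    (hW : ∀ q a q', |(A.weight q a q' : ℝ)| ≤ W)
    {w : ℕ → α} {n : ℕ} {r : ℕ → Q} (h : A.FinRun w n r) :
    |A.runVal w r n| ≤ 2 * W := by
  have hW0 : 0 ≤ W := le_trans (abs_nonneg _) (hW (r 0) (w 0) (r 0))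
  calc |A.runVal w r n| ≤ ∑ i ∈ range n,
        |(A.weight (r i) (w i) (r (i + 1)) : ℝ) *
          ∏ j ∈ range i, (1 / (A.disc (r j) (w j) (r (j + 1)) : ℝ))| :=
        Finset.abs_sum_le_sum_abs _ _
    _ ≤ ∑ i ∈ range n, W * (2 : ℝ)⁻¹ ^ i := by
        apply Finset.sum_le_sum
        intro i hi
        have hi' := mem_range.mp hi
        have hd : ∀ j < i, A.delta (r j) (w j) (r (j + 1)) :=
          fun j hj => h.2 j (by omega)
        rw [abs_mul]
        apply mul_le_mul (hW _ _ _) _ (abs_nonneg _) hW0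
        rw [abs_of_pos (prod_inv_disc_pos hI hd)]
        exact prod_inv_disc_le hI hd
    _ = W * ∑ i ∈ range n, (2 : ℝ)⁻¹ ^ i := by rw [Finset.mul_sum]
    _ ≤ W * 2 := by
        apply mul_le_mul_of_nonneg_left (sum_half_pow_le n) hW0
    _ = 2 * W := by ring

lemma summable_run {A : NMDA α Q} {W : ℝ} (hI : A.Integral)
    (hW : ∀ q a q', |(A.weight q a q' : ℝ)| ≤ W)
    {w : ℕ → α} {r : ℕ → Q} (h : A.InfRun w r) :
    Summable (fun i => (A.weight (r i) (w i) (r (i + 1)) : ℝ) *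
      ∏ j ∈ range i, (1 / (A.disc (r j) (w j) (r (j + 1)) : ℝ))) := by
  have hW0 : 0 ≤ W := le_trans (abs_nonneg _) (hW (r 0) (w 0) (r 0))
  apply Summable.of_norm_bounded (g := fun i => W * (2 : ℝ)⁻¹ ^ i)
  · exact (summable_geometric_of_lt_one (by norm_num) (by norm_num)).mul_left W
  · intro i
    have hd : ∀ j < i, A.delta (r j) (w j) (r (j + 1)) := fun j _ => h.2 j
    rw [Real.norm_eq_abs, abs_mul, abs_of_pos (prod_inv_disc_pos hI hd)]
    exact mul_le_mul (hW _ _ _) (prod_inv_disc_le hI hd) (le_of_lt (prod_inv_disc_pos hI hd)) hW0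

lemma infRunVal_sub_runVal {A : NMDA α Q} {W : ℝ} (hI : A.Integral)
    (hW : ∀ q a q', |(A.weight q a q' : ℝ)| ≤ W)
    {w : ℕ → α} {r : ℕ → Q} (h : A.InfRun w r) (n : ℕ) :
    |A.infRunVal w r - A.runVal w r n| ≤ 2 * W * (2 : ℝ)⁻¹ ^ n := by
  have hW0 : 0 ≤ W := le_trans (abs_nonneg _) (hW (r 0) (w 0) (r 0))
  set f : ℕ → ℝ := fun i => (A.weight (r i) (w i) (r (i + 1)) : ℝ) *
      ∏ j ∈ range i, (1 / (A.disc (r j) (w j) (r (j + 1)) : ℝ)) with hf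
  have hs : Summable f := summable_run hI hW h
  have hsplit : ∑ i ∈ range n, f i + ∑' k, f (k + n) = ∑' i, f i :=
    (Summable.sum_add_tsum_nat_add n hs)
  have heq : A.infRunVal w r - A.runVal w r n = ∑' k, f (k + n) := by
    rw [infRunVal, runVal, ← hsplit]; ring
  rw [heq]
  have hbound : ∀ k, ‖f (k + n)‖ ≤ W * (2 : ℝ)⁻¹ ^ n * (2 : ℝ)⁻¹ ^ k := by
    intro k
    have hd : ∀ j < k + n, A.delta (r j) (w j) (r (j + 1)) := fun j _ => h.2 j
    rw [Real.norm_eq_abs, hf]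
    simp only []
    rw [abs_mul, abs_of_pos (prod_inv_disc_pos hI hd)]
    calc |(A.weight (r (k+n)) (w (k+n)) (r (k+n+1)) : ℝ)| *
          ∏ j ∈ range (k+n), (1 / (A.disc (r j) (w j) (r (j + 1)) : ℝ))
        ≤ W * (2 : ℝ)⁻¹ ^ (k + n) :=
          mul_le_mul (hW _ _ _) (prod_inv_disc_le hI hd)
            (le_of_lt (prod_inv_disc_pos hI hd)) hW0
      _ = W * (2 : ℝ)⁻¹ ^ n * (2 : ℝ)⁻¹ ^ k := by rw [pow_add]; ring
  have hsg : Summable (fun k => W * (2 : ℝ)⁻¹ ^ n * (2 : ℝ)⁻¹ ^ k) :=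
    (summable_geometric_of_lt_one (by norm_num) (by norm_num)).mul_left _
  calc |∑' k, f (k + n)| ≤ ∑' k, W * (2 : ℝ)⁻¹ ^ n * (2 : ℝ)⁻¹ ^ k := by
        have hsf : Summable fun k => ‖f (k + n)‖ := by
          apply Summable.of_nonneg_of_le (fun k => norm_nonneg _) hbound hsg
        rw [← Real.norm_eq_abs]
        exact (norm_tsum_le_tsum_norm hsf).trans (Summable.tsum_le_tsum hbound hsf hsg)
    _ = W * (2 : ℝ)⁻¹ ^ n * 2 := by
        rw [tsum_mul_left]
        congr 1
        simpa [one_div] using tsum_geometric_two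
    _ = 2 * W * (2 : ℝ)⁻¹ ^ n := by ring

lemma runVal_zero (A : NMDA α Q) (w : ℕ → α) (r : ℕ → Q) : A.runVal w r 0 = 0 := by
  simp [runVal]

lemma infRunVal_abs_le {A : NMDA α Q} {W : ℝ} (hI : A.Integral)
    (hW : ∀ q a q', |(A.weight q a q' : ℝ)| ≤ W)
    {w : ℕ → α} {r : ℕ → Q} (h : A.InfRun w r) :
    |A.infRunVal w r| ≤ 2 * W := by
  have := infRunVal_sub_runVal hI hW h 0
  rw [runVal_zero] at this
  simpa using this

section ValueSets

variable {A : NMDA α Q} {w : ℕ → α}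

lemma finSet_nonempty (A : NMDA α Q) (w : ℕ → α) (n : ℕ) :
    { x : ℝ | ∃ r : ℕ → Q, A.FinRun w n r ∧ x = A.runVal w r n }.Nonempty := by
  obtain ⟨r, hr⟩ := A.exists_finRun w n
  exact ⟨_, r, hr, rfl⟩

lemma infSet_nonempty (A : NMDA α Q) (w : ℕ → α) :
    { x : ℝ | ∃ r : ℕ → Q, A.InfRun w r ∧ x = A.infRunVal w r }.Nonempty := by
  obtain ⟨r, hr⟩ := A.exists_infRun w
  exact ⟨_, r, hr, rfl⟩

lemma finSet_bddBelow {W : ℝ} (hI : A.Integral)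
    (hW : ∀ q a q', |(A.weight q a q' : ℝ)| ≤ W) (n : ℕ) :
    BddBelow { x : ℝ | ∃ r : ℕ → Q, A.FinRun w n r ∧ x = A.runVal w r n } := by
  refine ⟨-(2 * W), fun x hx => ?_⟩
  obtain ⟨r, hr, rfl⟩ := hx
  exact neg_le_of_abs_le (runVal_abs_le hI hW hr)

lemma infSet_bddBelow {W : ℝ} (hI : A.Integral)
    (hW : ∀ q a q', |(A.weight q a q' : ℝ)| ≤ W) :
    BddBelow { x : ℝ | ∃ r : ℕ → Q, A.InfRun w r ∧ x = A.infRunVal w r } := by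
  refine ⟨-(2 * W), fun x hx => ?_⟩
  obtain ⟨r, hr, rfl⟩ := hx
  exact neg_le_of_abs_le (infRunVal_abs_le hI hW hr)

lemma abs_finVal_sub_infVal {W : ℝ} (hI : A.Integral)
    (hW : ∀ q a q', |(A.weight q a q' : ℝ)| ≤ W) (n : ℕ) :
    |A.finVal w n - A.infVal w| ≤ 2 * W * (2 : ℝ)⁻¹ ^ n := by
  set c := 2 * W * (2 : ℝ)⁻¹ ^ n with hc
  rw [abs_sub_le_iff]
  constructor
  · -- finVal ≤ infVal + c
    have h1 : A.finVal w n ≤ A.infVal w + c := by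
      rw [infVal]
      have : ∀ x ∈ { x : ℝ | ∃ r : ℕ → Q, A.InfRun w r ∧ x = A.infRunVal w r },
          A.finVal w n - c ≤ x := by
        rintro x ⟨r, hr, rfl⟩
        have h2 : A.finVal w n ≤ A.runVal w r n :=
          csInf_le (finSet_bddBelow hI hW n) ⟨r, hr.finRun n, rfl⟩
        have h3 := infRunVal_sub_runVal hI hW hr n
        rw [abs_sub_le_iff] at h3
        linarith [h3.2]
      linarith [le_csInf (infSet_nonempty A w) this]
    linarith
  · -- infVal ≤ finVal + c
    have h1 : A.infVal w ≤ A.finVal w n + c := by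
      rw [finVal]
      have : ∀ x ∈ { x : ℝ | ∃ r : ℕ → Q, A.FinRun w n r ∧ x = A.runVal w r n },
          A.infVal w - c ≤ x := by
        rintro x ⟨r, hr, rfl⟩
        obtain ⟨r', hr', hagree⟩ := A.exists_extend w n r hr
        have h2 : A.infVal w ≤ A.infRunVal w r' :=
          csInf_le (infSet_bddBelow hI hW) ⟨r', hr', rfl⟩
        have h3 := infRunVal_sub_runVal hI hW hr' n
        rw [abs_sub_le_iff] at h3
        have h4 : A.runVal w r' n = A.runVal w r n := runVal_congr hagree
        linarith [h3.1]
      linarith [le_csInf (finSet_nonempty A w n) this]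
    linarith

end ValueSets

lemma tendsto_finVal [Finite Q] [Finite α] {A : NMDA α Q} (hI : A.Integral) (w : ℕ → α) :
    Tendsto (A.finVal w) atTop (nhds (A.infVal w)) := by
  obtain ⟨W, hW0, hW⟩ := A.exists_weight_bound
  rw [← tendsto_sub_nhds_zero_iff]
  apply squeeze_zero_norm (fun n => abs_finVal_sub_infVal hI hW n)
  have : Tendsto (fun n : ℕ => (2 : ℝ)⁻¹ ^ n) atTop (nhds 0) :=
    tendsto_pow_atTop_nhds_zero_of_lt_one (by norm_num) (by norm_num)
  simpa using this.const_mul (2 * W)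




/-! ### Tidy automata -/

noncomputable def dfac (θ : List α → ℕ) (w : ℕ → α) (i : ℕ) : ℝ :=
  ∏ j ∈ range i, ((θ (List.ofFn fun t : Fin (j + 1) => w t.val) : ℝ))⁻¹

lemma runVal_tidy {A : NMDA α Q} {θ : List α → ℕ} (hT : A.TidyWith θ)
    {w : ℕ → α} {n : ℕ} {r : ℕ → Q} (h : A.FinRun w n r) :
    A.runVal w r n =
      ∑ i ∈ range n, (A.weight (r i) (w i) (r (i + 1)) : ℝ) * dfac θ w i := by
  unfold runVal dfac
  refine Finset.sum_congr rfl fun i hi => ?_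
  congr 1
  refine Finset.prod_congr rfl fun j hj => ?_
  have hj' := mem_range.mp hj
  have hi' := mem_range.mp hi
  rw [one_div, hT w j r (h.mono (by omega))]
  push_cast
  ring

/-! ### Deterministic automata -/

lemma det_finRun_unique {C : NMDA α Q} (hd : C.Deterministic) {w : ℕ → α} {n : ℕ}
    {r r' : ℕ → Q} (hr : C.FinRun w n r) (hr' : C.FinRun w n r') :
    ∀ i ≤ n, r i = r' i := by
  obtain ⟨⟨q0, hq0⟩, hfun⟩ := hd
  intro i
  induction i with
  | zero =>
    intro _
    have h1 : r 0 ∈ C.init := hr.1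
    have h2 : r' 0 ∈ C.init := hr'.1
    rw [hq0] at h1 h2
    rw [h1, h2]
  | succ i ih =>
    intro hi
    have := ih (by omega)
    exact hfun (r i) (w i) (r (i + 1)) (r' (i + 1))
      (hr.2 i (by omega)) (this ▸ hr'.2 i (by omega))

lemma finVal_det {C : NMDA α Q} (hd : C.Deterministic) {w : ℕ → α} {n : ℕ}
    {r : ℕ → Q} (hr : C.FinRun w n r) : C.finVal w n = C.runVal w r n := by
  have hset : { x : ℝ | ∃ r' : ℕ → Q, C.FinRun w n r' ∧ x = C.runVal w r' n }
      = {C.runVal w r n} := by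
    ext x
    simp only [Set.mem_setOf_eq, Set.mem_singleton_iff]
    constructor
    · rintro ⟨r', hr', rfl⟩
      exact runVal_congr (det_finRun_unique hd hr' hr)
    · rintro rfl
      exact ⟨r, hr, rfl⟩
  rw [finVal, hset, csInf_singleton]

end NMDA

/-- The pair of functions `f` (on nonempty finite words, given as length-`n` prefixes of
infinite sequences) and `g` (on infinite words) is computed by some `θ`-NMDA. -/
def RealizesWith {α : Type} (θ : List α → ℕ)
    (f : (ℕ → α) → ℕ → ℝ) (g : (ℕ → α) → ℝ) : Prop :=
  ∃ (Q : Type) (_ : Fintype Q) (C : NMDA α Q), C.ThetaNMDA θ ∧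
    (∀ (w : ℕ → α) (n : ℕ), 0 < n → C.finVal w n = f w n) ∧
      ∀ w : ℕ → α, C.infVal w = g w

namespace NMDA
/-! ### Realization framework -/

lemma realizes_of {α : Type} [Finite α] {QC : Type} [Fintype QC] {θ : List α → ℕ}
    (C : NMDA α QC) (hC : C.ThetaNMDA θ) {f : (ℕ → α) → ℕ → ℝ} {g : (ℕ → α) → ℝ}
    (hfin : ∀ w n, C.finVal w n = f w n)
    (hg : ∀ w, Tendsto (fun n => f w n) atTop (nhds (g w))) :
    RealizesWith θ f g := by
  refine ⟨QC, inferInstance, C, hC, fun w n _ => hfin w n, fun w => ?_⟩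
  have t1 : Tendsto (fun n => f w n) atTop (nhds (C.infVal w)) :=
    (tendsto_finVal hC.1 w).congr (fun n => hfin w n)
  exact tendsto_nhds_unique t1 (hg w)



/-! ### Product (sum of values) construction -/

variable {QA QB : Type}

def prodSum (A : NMDA α QA) (B : NMDA α QB) : NMDA α (QA × QB) where
  init := {p | p.1 ∈ A.init ∧ p.2 ∈ B.init}
  init_nonempty := by
    obtain ⟨a, ha⟩ := A.init_nonempty
    obtain ⟨b, hb⟩ := B.init_nonempty
    exact ⟨(a, b), ha, hb⟩
  delta := fun p a p' => A.delta p.1 a p'.1 ∧ B.delta p.2 a p'.2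
  complete := fun q a => by
    obtain ⟨qa, ha⟩ := A.complete q.1 a
    obtain ⟨qb, hb⟩ := B.complete q.2 a
    exact ⟨(qa, qb), ha, hb⟩
  weight := fun p a p' => A.weight p.1 a p'.1 + B.weight p.2 a p'.2
  disc := fun p a p' => A.disc p.1 a p'.1
  disc_gt_one := fun _ _ _ h => A.disc_gt_one _ _ _ h.1

variable {A : NMDA α QA} {B : NMDA α QB} {θ : List α → ℕ} {w : ℕ → α} {n : ℕ}

lemma prodSum_finRun_fst {r : ℕ → QA × QB} (h : (prodSum A B).FinRun w n r) :
    A.FinRun w n (fun i => (r i).1) := ⟨h.1.1, fun i hi => (h.2 i hi).1⟩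

lemma prodSum_finRun_snd {r : ℕ → QA × QB} (h : (prodSum A B).FinRun w n r) :
    B.FinRun w n (fun i => (r i).2) := ⟨h.1.2, fun i hi => (h.2 i hi).2⟩

lemma prodSum_finRun_pair {rA : ℕ → QA} {rB : ℕ → QB}
    (hA : A.FinRun w n rA) (hB : B.FinRun w n rB) :
    (prodSum A B).FinRun w n (fun i => (rA i, rB i)) :=
  ⟨⟨hA.1, hB.1⟩, fun i hi => ⟨hA.2 i hi, hB.2 i hi⟩⟩

lemma prodSum_theta (hA : A.ThetaNMDA θ) (_hB : B.ThetaNMDA θ) :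
    (prodSum A B).ThetaNMDA θ :=
  ⟨fun _ _ _ h => hA.1 _ _ _ h.1,
   fun w n r h => hA.2 w n (fun i => (r i).1) (prodSum_finRun_fst h)⟩

lemma prodSum_runVal (hA : A.ThetaNMDA θ) (hB : B.ThetaNMDA θ)
    {r : ℕ → QA × QB} (h : (prodSum A B).FinRun w n r) :
    (prodSum A B).runVal w r n =
      A.runVal w (fun i => (r i).1) n + B.runVal w (fun i => (r i).2) n := by
  rw [runVal_tidy (prodSum_theta hA hB).2 h, runVal_tidy hA.2 (prodSum_finRun_fst h),
    runVal_tidy hB.2 (prodSum_finRun_snd h), ← Finset.sum_add_distrib]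
  refine Finset.sum_congr rfl fun i _ => ?_
  show ((A.weight _ _ _ + B.weight _ _ _ : ℚ) : ℝ) * _ = _
  push_cast
  ring

lemma prodSum_finVal [Finite α] [Finite QA] [Finite QB]
    (hA : A.ThetaNMDA θ) (hB : B.ThetaNMDA θ) (w : ℕ → α) (n : ℕ) :
    (prodSum A B).finVal w n = A.finVal w n + B.finVal w n := by
  obtain ⟨WA, _, hWA⟩ := A.exists_weight_bound
  obtain ⟨WB, _, hWB⟩ := B.exists_weight_bound
  obtain ⟨WC, _, hWC⟩ := (prodSum A B).exists_weight_bound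
  have bA := finSet_bddBelow (A := A) (w := w) hA.1 hWA n
  have bB := finSet_bddBelow (A := B) (w := w) hB.1 hWB n
  have bC := finSet_bddBelow (A := prodSum A B) (w := w) (prodSum_theta hA hB).1 hWC n
  apply le_antisymm
  · have key : ∀ a ∈ { x : ℝ | ∃ r : ℕ → QA, A.FinRun w n r ∧ x = A.runVal w r n },
        ∀ b ∈ { x : ℝ | ∃ r : ℕ → QB, B.FinRun w n r ∧ x = B.runVal w r n },
        (prodSum A B).finVal w n ≤ a + b := by
      rintro a ⟨rA, hrA, rfl⟩ b ⟨rB, hrB, rfl⟩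
      refine csInf_le bC ⟨fun i => (rA i, rB i), prodSum_finRun_pair hrA hrB, ?_⟩
      rw [prodSum_runVal hA hB (prodSum_finRun_pair hrA hrB)]
    have h1 : ∀ b ∈ { x : ℝ | ∃ r : ℕ → QB, B.FinRun w n r ∧ x = B.runVal w r n },
        (prodSum A B).finVal w n - b ≤ A.finVal w n := by
      intro b hb
      refine le_csInf (finSet_nonempty A w n) fun a ha => ?_
      linarith [key a ha b hb]
    have h2 : (prodSum A B).finVal w n - A.finVal w n ≤ B.finVal w n := by
      refine le_csInf (finSet_nonempty B w n) fun b hb => ?_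
      linarith [h1 b hb]
    linarith
  · refine le_csInf (finSet_nonempty _ w n) ?_
    rintro x ⟨r, hr, rfl⟩
    rw [prodSum_runVal hA hB hr]
    have g1 : A.finVal w n ≤ A.runVal w (fun i => (r i).1) n :=
      csInf_le bA ⟨_, prodSum_finRun_fst hr, rfl⟩
    have g2 : B.finVal w n ≤ B.runVal w (fun i => (r i).2) n :=
      csInf_le bB ⟨_, prodSum_finRun_snd hr, rfl⟩
    linarith

/-! ### Union (min) construction -/

def union (A : NMDA α QA) (B : NMDA α QB) : NMDA α (QA ⊕ QB) where
  init := Sum.inl '' A.init ∪ Sum.inr '' B.init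
  init_nonempty := A.init_nonempty.elim fun a ha => ⟨.inl a, .inl ⟨a, ha, rfl⟩⟩
  delta := fun s a s' =>
    match s, s' with
    | .inl q, .inl q' => A.delta q a q'
    | .inr q, .inr q' => B.delta q a q'
    | _, _ => False
  complete := fun s a =>
    match s with
    | .inl q => (A.complete q a).elim fun q' h => ⟨.inl q', h⟩
    | .inr q => (B.complete q a).elim fun q' h => ⟨.inr q', h⟩
  weight := fun s a s' =>
    match s, s' with
    | .inl q, .inl q' => A.weight q a q'
    | .inr q, .inr q' => B.weight q a q'
    | _, _ => 0
  disc := fun s a s' =>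
    match s, s' with
    | .inl q, .inl q' => A.disc q a q'
    | .inr q, .inr q' => B.disc q a q'
    | _, _ => 2
  disc_gt_one := fun s a s' h => by
    match s, s' with
    | .inl q, .inl q' => exact A.disc_gt_one q a q' h
    | .inr q, .inr q' => exact B.disc_gt_one q a q' h
    | .inl q, .inr q' => exact h.elim
    | .inr q, .inl q' => exact h.elim

lemma union_finRun_inl {rA : ℕ → QA} (hA : A.FinRun w n rA) :
    (union A B).FinRun w n (fun i => .inl (rA i)) :=
  ⟨Or.inl ⟨rA 0, hA.1, rfl⟩, fun i hi => hA.2 i hi⟩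

lemma union_finRun_inr {rB : ℕ → QB} (hB : B.FinRun w n rB) :
    (union A B).FinRun w n (fun i => .inr (rB i)) :=
  ⟨Or.inr ⟨rB 0, hB.1, rfl⟩, fun i hi => hB.2 i hi⟩

lemma union_runVal_inl (rA : ℕ → QA) :
    (union A B).runVal w (fun i => .inl (rA i)) n = A.runVal w rA n := rfl

lemma union_runVal_inr (rB : ℕ → QB) :
    (union A B).runVal w (fun i => .inr (rB i)) n = B.runVal w rB n := rfl

lemma union_finRun_decomp {r : ℕ → QA ⊕ QB} (h : (union A B).FinRun w n r) :
    (∃ rA, A.FinRun w n rA ∧ ∀ i ≤ n, r i = .inl (rA i)) ∨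
      (∃ rB, B.FinRun w n rB ∧ ∀ i ≤ n, r i = .inr (rB i)) := by
  classical
  rcases h.1 with ⟨a0, ha0, h0⟩ | ⟨b0, hb0, h0⟩
  · left
    have hst : ∀ i ≤ n, ∃ q, r i = .inl q := by
      intro i
      induction i with
      | zero => exact fun _ => ⟨a0, h0.symm⟩
      | succ i ih =>
        intro hi
        obtain ⟨q, hq⟩ := ih (by omega)
        have hd := h.2 i (by omega)
        rw [hq] at hd
        cases hr' : r (i + 1) with
        | inl q' => exact ⟨q', rfl⟩
        | inr q' => rw [hr'] at hd; exact hd.elim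
    let rA : ℕ → QA := fun i => Sum.elim id (fun _ => a0) (r i)
    have hre : ∀ i ≤ n, r i = .inl (rA i) := by
      intro i hi
      obtain ⟨q, hq⟩ := hst i hi
      simp [rA, hq]
    refine ⟨rA, ⟨?_, ?_⟩, hre⟩
    · have : rA 0 = a0 := by simp [rA, ← h0]
      rw [this]; exact ha0
    · intro i hi
      have hd := h.2 i hi
      rw [hre i (by omega), hre (i + 1) (by omega)] at hd
      exact hd
  · right
    have hst : ∀ i ≤ n, ∃ q, r i = .inr q := by
      intro i
      induction i with
      | zero => exact fun _ => ⟨b0, h0.symm⟩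
      | succ i ih =>
        intro hi
        obtain ⟨q, hq⟩ := ih (by omega)
        have hd := h.2 i (by omega)
        rw [hq] at hd
        cases hr' : r (i + 1) with
        | inr q' => exact ⟨q', rfl⟩
        | inl q' => rw [hr'] at hd; exact hd.elim
    let rB : ℕ → QB := fun i => Sum.elim (fun _ => b0) id (r i)
    have hre : ∀ i ≤ n, r i = .inr (rB i) := by
      intro i hi
      obtain ⟨q, hq⟩ := hst i hi
      simp [rB, hq]
    refine ⟨rB, ⟨?_, ?_⟩, hre⟩
    · have : rB 0 = b0 := by simp [rB, ← h0]
      rw [this]; exact hb0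
    · intro i hi
      have hd := h.2 i hi
      rw [hre i (by omega), hre (i + 1) (by omega)] at hd
      exact hd

lemma union_theta (hA : A.ThetaNMDA θ) (hB : B.ThetaNMDA θ) :
    (union A B).ThetaNMDA θ := by
  constructor
  · intro s a s' h
    match s, s' with
    | .inl q, .inl q' => exact hA.1 q a q' h
    | .inr q, .inr q' => exact hB.1 q a q' h
    | .inl q, .inr q' => exact h.elim
    | .inr q, .inl q' => exact h.elim
  · intro w n r h
    rcases union_finRun_decomp h with ⟨rA, hrA, hre⟩ | ⟨rB, hrB, hre⟩
    · rw [hre n (by omega), hre (n + 1) (by omega)]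
      exact hA.2 w n rA hrA
    · rw [hre n (by omega), hre (n + 1) (by omega)]
      exact hB.2 w n rB hrB

lemma union_finVal [Finite α] [Finite QA] [Finite QB]
    (hA : A.ThetaNMDA θ) (hB : B.ThetaNMDA θ) (w : ℕ → α) (n : ℕ) :
    (union A B).finVal w n = min (A.finVal w n) (B.finVal w n) := by
  obtain ⟨WA, _, hWA⟩ := A.exists_weight_bound
  obtain ⟨WB, _, hWB⟩ := B.exists_weight_bound
  have bA := finSet_bddBelow (A := A) (w := w) hA.1 hWA n
  have bB := finSet_bddBelow (A := B) (w := w) hB.1 hWB n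
  have hset : { x : ℝ | ∃ r : ℕ → QA ⊕ QB, (union A B).FinRun w n r ∧
        x = (union A B).runVal w r n }
      = { x : ℝ | ∃ r : ℕ → QA, A.FinRun w n r ∧ x = A.runVal w r n }
        ∪ { x : ℝ | ∃ r : ℕ → QB, B.FinRun w n r ∧ x = B.runVal w r n } := by
    ext x
    constructor
    · rintro ⟨r, hr, rfl⟩
      rcases union_finRun_decomp hr with ⟨rA, hrA, hre⟩ | ⟨rB, hrB, hre⟩
      · left
        refine ⟨rA, hrA, ?_⟩
        rw [runVal_congr (A := union A B) (r' := r) (r := fun i => Sum.inl (rA i)) hre,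
          union_runVal_inl]
      · right
        refine ⟨rB, hrB, ?_⟩
        rw [runVal_congr (A := union A B) (r' := r) (r := fun i => Sum.inr (rB i)) hre,
          union_runVal_inr]
    · rintro (⟨rA, hrA, rfl⟩ | ⟨rB, hrB, rfl⟩)
      · exact ⟨_, union_finRun_inl hrA, (union_runVal_inl rA).symm⟩
      · exact ⟨_, union_finRun_inr hrB, (union_runVal_inr rB).symm⟩
  rw [finVal, hset, csInf_union bA (finSet_nonempty A w n) bB (finSet_nonempty B w n)]
  rfl

/-! ### Scaling construction -/

def scale (c : ℚ) (A : NMDA α QA) : NMDA α QA :=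
  { A with weight := fun q a q' => c * A.weight q a q' }

lemma scale_finRun {c : ℚ} {r : ℕ → QA} :
    (scale c A).FinRun w n r ↔ A.FinRun w n r := Iff.rfl

lemma scale_theta {c : ℚ} (hA : A.ThetaNMDA θ) : (scale c A).ThetaNMDA θ :=
  ⟨hA.1, hA.2⟩

lemma scale_runVal (c : ℚ) (r : ℕ → QA) :
    (scale c A).runVal w r n = (c : ℝ) * A.runVal w r n := by
  unfold runVal
  rw [Finset.mul_sum]
  refine Finset.sum_congr rfl fun i _ => ?_
  have hdisc : (scale c A).disc = A.disc := rfl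
  show ((c * A.weight _ _ _ : ℚ) : ℝ) * _ = _
  rw [hdisc]
  push_cast
  ring

lemma scale_finVal [Finite α] [Finite QA] {c : ℚ} (hc : 0 ≤ c)
    (hA : A.ThetaNMDA θ) (w : ℕ → α) (n : ℕ) :
    (scale c A).finVal w n = (c : ℝ) * A.finVal w n := by
  obtain ⟨WA, _, hWA⟩ := A.exists_weight_bound
  obtain ⟨WC, _, hWC⟩ := (scale c A).exists_weight_bound
  have bA := finSet_bddBelow (A := A) (w := w) hA.1 hWA n
  have bC := finSet_bddBelow (A := scale c A) (w := w) (scale_theta hA).1 hWC n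
  have hc' : (0 : ℝ) ≤ (c : ℝ) := by exact_mod_cast hc
  apply le_antisymm
  · rcases eq_or_lt_of_le hc' with hc0 | hc0
    · obtain ⟨r, hr⟩ := A.exists_finRun w n
      have : (scale c A).finVal w n ≤ (scale c A).runVal w r n := csInf_le bC ⟨r, hr, rfl⟩
      rw [scale_runVal] at this
      rw [← hc0] at this ⊢
      simpa using this
    · have key : ∀ a ∈ { x : ℝ | ∃ r : ℕ → QA, A.FinRun w n r ∧ x = A.runVal w r n },
          (scale c A).finVal w n / (c : ℝ) ≤ a := by
        rintro a ⟨r, hr, rfl⟩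
        rw [div_le_iff₀' hc0]
        exact csInf_le bC ⟨r, hr, (scale_runVal c r).symm⟩
      have := le_csInf (finSet_nonempty A w n) key
      rw [div_le_iff₀' hc0] at this
      exact this
  · refine le_csInf (finSet_nonempty _ w n) ?_
    rintro x ⟨r, hr, rfl⟩
    rw [scale_runVal]
    exact mul_le_mul_of_nonneg_left (csInf_le bA ⟨r, hr, rfl⟩) hc'

/-! ### Negation of a deterministic automaton -/

def negOf (A : NMDA α QA) : NMDA α QA :=
  { A with weight := fun q a q' => -(A.weight q a q') }

lemma negOf_det (hd : A.Deterministic) : (negOf A).Deterministic := hd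

lemma negOf_theta (hA : A.ThetaNMDA θ) : (negOf A).ThetaNMDA θ := ⟨hA.1, hA.2⟩

lemma negOf_runVal (r : ℕ → QA) : (negOf A).runVal w r n = -(A.runVal w r n) := by
  unfold runVal
  rw [← Finset.sum_neg_distrib]
  refine Finset.sum_congr rfl fun i _ => ?_
  have hdisc : (negOf A).disc = A.disc := rfl
  show ((-(A.weight _ _ _) : ℚ) : ℝ) * _ = _
  rw [hdisc]
  push_cast
  ring

lemma negOf_finVal (hd : A.Deterministic) (w : ℕ → α) (n : ℕ) :
    (negOf A).finVal w n = -(A.finVal w n) := by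
  obtain ⟨r, hr⟩ := A.exists_finRun w n
  have hr' : (negOf A).FinRun w n r := hr
  rw [finVal_det hd hr, finVal_det (negOf_det hd) hr', negOf_runVal]


section Determinization

open scoped Classical
set_option linter.unusedSectionVars false
set_option linter.unusedVariables false

variable {α QA : Type} [Fintype α] [Fintype QA]

noncomputable def Wq (A : NMDA α QA) : ℚ := ∑ t : QA × α × QA, |A.weight t.1 t.2.1 t.2.2|

lemma Wq_nonneg (A : NMDA α QA) : 0 ≤ Wq A :=
  Finset.sum_nonneg fun _ _ => abs_nonneg _

lemma abs_weight_le (A : NMDA α QA) (q : QA) (a : α) (q' : QA) :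
    |A.weight q a q'| ≤ Wq A := by
  have h := Finset.single_le_sum (f := fun t : QA × α × QA => |A.weight t.1 t.2.1 t.2.2|)
    (fun _ _ => abs_nonneg _) (Finset.mem_univ (q, a, q'))
  unfold Wq
  simpa using h

noncomputable def dQ (A : NMDA α QA) : ℕ := ∏ t : QA × α × QA, (A.weight t.1 t.2.1 t.2.2).den

lemma dQ_pos (A : NMDA α QA) : 0 < dQ A :=
  Finset.prod_pos fun t _ => (A.weight t.1 t.2.1 t.2.2).pos

def onGrid (A : NMDA α QA) (x : ℚ) : Prop := ∃ z : ℤ, x * (dQ A : ℚ) = (z : ℚ)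

lemma onGrid_weight (A : NMDA α QA) (q : QA) (a : α) (q' : QA) :
    onGrid A (A.weight q a q') := by
  set x := A.weight q a q'
  have hdvd : (x.den : ℤ) ∣ (dQ A : ℤ) := by
    exact_mod_cast Nat.cast_dvd_cast
      (Finset.dvd_prod_of_mem (fun t : QA × α × QA => (A.weight t.1 t.2.1 t.2.2).den)
        (Finset.mem_univ (q, a, q')))
  obtain ⟨k, hk⟩ := hdvd
  refine ⟨x.num * k, ?_⟩
  have hden : (x * x.den : ℚ) = x.num := by
    rw [mul_comm]; exact_mod_cast Rat.den_mul_eq_num x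
  have : ((dQ A : ℤ) : ℚ) = (x.den : ℚ) * (k : ℚ) := by exact_mod_cast hk
  push_cast at this ⊢
  rw [show ((dQ A : ℚ)) = (x.den : ℚ) * (k : ℚ) by exact_mod_cast this, ← mul_assoc, hden]

lemma onGrid_zero (A : NMDA α QA) : onGrid A 0 := ⟨0, by simp⟩

lemma onGrid_add {A : NMDA α QA} {x y : ℚ} (hx : onGrid A x) (hy : onGrid A y) :
    onGrid A (x + y) := by
  obtain ⟨z1, h1⟩ := hx; obtain ⟨z2, h2⟩ := hy
  exact ⟨z1 + z2, by push_cast [add_mul, h1, h2]; ring⟩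

lemma onGrid_sub {A : NMDA α QA} {x y : ℚ} (hx : onGrid A x) (hy : onGrid A y) :
    onGrid A (x - y) := by
  obtain ⟨z1, h1⟩ := hx; obtain ⟨z2, h2⟩ := hy
  exact ⟨z1 - z2, by push_cast [sub_mul, h1, h2]; ring⟩

lemma onGrid_intMul {A : NMDA α QA} {x : ℚ} (z0 : ℤ) (hx : onGrid A x) :
    onGrid A ((z0 : ℚ) * x) := by
  obtain ⟨z1, h1⟩ := hx
  exact ⟨z0 * z1, by push_cast [mul_assoc, h1]; ring⟩

noncomputable def Tq (A : NMDA α QA) : ℚ := 4 * Wq A + 1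

def GapOK (A : NMDA α QA) (x : WithTop ℚ) : Prop :=
  x = ⊤ ∨ ∃ x0 : ℚ, x = (x0 : WithTop ℚ) ∧ 0 ≤ x0 ∧ x0 ≤ Tq A ∧ onGrid A x0

lemma finite_gapOK (A : NMDA α QA) : {x : WithTop ℚ | GapOK A x}.Finite := by
  have hbig : (insert (⊤ : WithTop ℚ)
      ((fun z : ℤ => (((z : ℚ) / (dQ A : ℚ)) : WithTop ℚ)) ''
        (Set.Icc 0 ⌈Tq A * (dQ A : ℚ)⌉))).Finite :=
    ((Set.finite_Icc _ _).image _).insert ⊤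
  refine hbig.subset ?_
  rintro x (rfl | ⟨x0, rfl, h0, hT, z, hz⟩)
  · exact Set.mem_insert _ _
  · right
    have hd : (0 : ℚ) < (dQ A : ℚ) := by exact_mod_cast dQ_pos A
    refine ⟨z, ⟨?_, ?_⟩, ?_⟩
    · have : (0 : ℚ) ≤ (z : ℚ) := hz ▸ mul_nonneg h0 hd.le
      exact_mod_cast this
    · have h1 : (z : ℚ) ≤ Tq A * (dQ A : ℚ) := hz ▸ mul_le_mul_of_nonneg_right hT hd.le
      have h2 : Tq A * (dQ A : ℚ) ≤ (⌈Tq A * (dQ A : ℚ)⌉ : ℚ) := Int.le_ceil _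
      exact_mod_cast h1.trans h2
    · have : x0 = (z : ℚ) / (dQ A : ℚ) := by
        field_simp
        linarith [hz]
      rw [this]

def DetState (A : NMDA α QA) : Type := QA × {g : QA → WithTop ℚ // ∀ q, GapOK A (g q)}

lemma finite_detState (A : NMDA α QA) : Finite (DetState A) := by
  haveI h1 : Finite {x : WithTop ℚ // GapOK A x} := (finite_gapOK A).to_subtype
  haveI h2 : Finite {g : QA → WithTop ℚ // ∀ q, GapOK A (g q)} :=
    Finite.of_equiv _ (Equiv.subtypePiEquivPi (p := fun _ x => GapOK A x)).symm
  unfold DetState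
  infer_instance


noncomputable def nxt (A : NMDA α QA) (p : QA) (a : α) : QA := (A.complete p a).choose

lemma nxt_delta (A : NMDA α QA) (p : QA) (a : α) : A.delta p a (nxt A p a) :=
  (A.complete p a).choose_spec

noncomputable def cap (A : NMDA α QA) (x : WithTop ℚ) : WithTop ℚ :=
  if x ≤ (Tq A : WithTop ℚ) then x else ⊤

lemma cap_top (A : NMDA α QA) : cap A ⊤ = ⊤ := by
  simp [cap]

lemma le_cap (A : NMDA α QA) (x : WithTop ℚ) : x ≤ cap A x := by
  unfold cap
  split
  · exact le_refl x
  · exact le_top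

noncomputable def entry (A : NMDA α QA) (a : α) (g : QA → WithTop ℚ) (q q' : QA) :
    WithTop ℚ :=
  if A.delta q a q' then g q + ((A.weight q a q' : ℚ) : WithTop ℚ) else ⊤

noncomputable def tf (A : NMDA α QA) (a : α) (g : QA → WithTop ℚ) (q' : QA) : WithTop ℚ :=
  Finset.univ.inf (fun q => entry A a g q q')

noncomputable def mf (A : NMDA α QA) (a : α) (g : QA → WithTop ℚ) : WithTop ℚ :=
  Finset.univ.inf (tf A a g)

noncomputable def outw (A : NMDA α QA) (a : α) (g : QA → WithTop ℚ) : ℚ :=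
  WithTop.untopD 0 (mf A a g)

noncomputable def gnew (A : NMDA α QA) (ρ0 : ℚ) (a : α) (g : QA → WithTop ℚ) :
    QA → WithTop ℚ :=
  fun q' => cap A ((tf A a g q').map (fun x => ρ0 * (x - outw A a g)))

lemma tf_cases (A : NMDA α QA) (a : α) (g : QA → WithTop ℚ) (q' : QA) :
    tf A a g q' = ⊤ ∨ ∃ q, A.delta q a q' ∧ ∃ v : ℚ, g q = (v : WithTop ℚ) ∧
      tf A a g q' = ((v + A.weight q a q' : ℚ) : WithTop ℚ) := by
  haveI : Nonempty QA := ⟨A.init_nonempty.choose⟩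
  obtain ⟨q0, -, hq0⟩ := Finset.exists_mem_eq_inf Finset.univ Finset.univ_nonempty
    (fun q => entry A a g q q')
  by_cases hd : A.delta q0 a q'
  · cases hgq : g q0 with
    | top =>
      left
      rw [tf, hq0, entry, if_pos hd, hgq, top_add]
    | coe v =>
      right
      refine ⟨q0, hd, v, hgq, ?_⟩
      rw [tf, hq0, entry, if_pos hd, hgq]
      push_cast
      rfl
  · left
    rw [tf, hq0, entry, if_neg hd]

lemma tf_grid {A : NMDA α QA} {a : α} {g : QA → WithTop ℚ} (hg : ∀ q, GapOK A (g q))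
    {q' : QA} {t0 : ℚ} (h : tf A a g q' = (t0 : WithTop ℚ)) : onGrid A t0 := by
  rcases tf_cases A a g q' with h' | ⟨q, hd, v, hgv, htf⟩
  · rw [h'] at h; exact absurd h (by simp)
  · rw [htf] at h
    have ht0 : t0 = v + A.weight q a q' := by exact_mod_cast h.symm
    have hvg : onGrid A v := by
      rcases hg q with h1 | ⟨x0, hx0, _, _, hx0g⟩
      · rw [h1] at hgv; exact absurd hgv (by simp)
      · rw [hx0] at hgv
        have : x0 = v := by exact_mod_cast hgv
        rwa [this] at hx0g
    rw [ht0]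
    exact onGrid_add hvg (onGrid_weight A q a q')

lemma mf_cases (A : NMDA α QA) (a : α) (g : QA → WithTop ℚ) :
    mf A a g = ⊤ ∨ ∃ q', mf A a g = tf A a g q' := by
  haveI : Nonempty QA := ⟨A.init_nonempty.choose⟩
  obtain ⟨q0, -, hq0⟩ := Finset.exists_mem_eq_inf Finset.univ Finset.univ_nonempty
    (tf A a g)
  exact Or.inr ⟨q0, hq0⟩

lemma mf_grid {A : NMDA α QA} {a : α} {g : QA → WithTop ℚ} (hg : ∀ q, GapOK A (g q))
    {m0 : ℚ} (h : mf A a g = (m0 : WithTop ℚ)) : onGrid A m0 := by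
  rcases mf_cases A a g with h' | ⟨q', hq'⟩
  · rw [h'] at h; exact absurd h (by simp)
  · rw [hq'] at h; exact tf_grid hg h

lemma gnew_ok {A : NMDA α QA} (hI : A.Integral) {p : QA} {a : α}
    {g : QA → WithTop ℚ} (hg : ∀ q, GapOK A (g q)) :
    ∀ q', GapOK A (gnew A (A.disc p a (nxt A p a)) a g q') := by
  intro q'
  set ρ0 := A.disc p a (nxt A p a) with hρ
  obtain ⟨k, hk⟩ := hI p a (nxt A p a) (nxt_delta A p a)
  have hρ2 : (2 : ℚ) ≤ ρ0 := two_le_disc hI (nxt_delta A p a)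
  rcases tf_cases A a g q' with h | ⟨q, hd, v, hgv, htf⟩
  · left
    rw [gnew, h]
    exact cap_top A
  · set t0 : ℚ := v + A.weight q a q' with ht0
    have hmfle : mf A a g ≤ (t0 : WithTop ℚ) := by
      rw [← htf]
      exact Finset.inf_le (Finset.mem_univ q')
    have hne : mf A a g ≠ ⊤ := fun hh => by rw [hh] at hmfle; exact absurd hmfle (by simp)
    obtain ⟨m0, hm0⟩ := WithTop.ne_top_iff_exists.mp hne
    have houtw : outw A a g = m0 := by rw [outw, ← hm0]; rfl
    have hm0le : m0 ≤ t0 := by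
      rw [← hm0] at hmfle
      exact_mod_cast hmfle
    set y : ℚ := ρ0 * (t0 - m0) with hy
    have hmap : (tf A a g q').map (fun x => ρ0 * (x - outw A a g)) = (y : WithTop ℚ) := by
      rw [htf, WithTop.map_coe, houtw]
    by_cases hcap : ((y : ℚ) : WithTop ℚ) ≤ (Tq A : WithTop ℚ)
    · right
      refine ⟨y, ?_, ?_, ?_, ?_⟩
      · rw [gnew, hmap, cap, if_pos hcap]
      · rw [hy]
        have : (0 : ℚ) ≤ t0 - m0 := by linarith
        nlinarith
      · exact_mod_cast hcap
      · rw [hy, hρ, hk]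
        apply onGrid_intMul
        apply onGrid_sub (tf_grid hg htf) (mf_grid hg hm0.symm)
    · left
      rw [gnew, hmap, cap, if_neg hcap]

noncomputable def g0 (A : NMDA α QA) : {g : QA → WithTop ℚ // ∀ q, GapOK A (g q)} :=
  ⟨fun q => if q ∈ A.init then (0 : WithTop ℚ) else ⊤, by
    intro q
    by_cases h : q ∈ A.init
    · right
      refine ⟨0, by simp [h], le_refl 0, ?_, onGrid_zero A⟩
      have := Wq_nonneg A
      rw [Tq]
      linarith
    · left
      simp [h]⟩

noncomputable def dstep (A : NMDA α QA) (hI : A.Integral) (s : DetState A) (a : α) :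
    DetState A :=
  (nxt A s.1 a, ⟨gnew A (A.disc s.1 a (nxt A s.1 a)) a s.2.val, gnew_ok hI s.2.2⟩)

noncomputable def detA (A : NMDA α QA) (hI : A.Integral) : NMDA α (DetState A) where
  init := {(A.init_nonempty.choose, g0 A)}
  init_nonempty := ⟨_, rfl⟩
  delta s a s' := s' = dstep A hI s a
  complete s a := ⟨_, rfl⟩
  weight s a _ := outw A a s.2.val
  disc s a _ := A.disc s.1 a (nxt A s.1 a)
  disc_gt_one := fun s a s' _ => A.disc_gt_one _ _ _ (nxt_delta A s.1 a)

lemma detA_deterministic (A : NMDA α QA) (hI : A.Integral) : (detA A hI).Deterministic :=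
  ⟨⟨_, rfl⟩, fun q a q₁ q₂ h1 h2 => h1.trans h2.symm⟩



/-! ### Cost semantics -/

noncomputable def rhoh (θ : List α → ℕ) (w : ℕ → α) (j : ℕ) : ℚ :=
  (θ (List.ofFn fun t : Fin (j + 1) => w t.val) : ℚ)

noncomputable def qd (θ : List α → ℕ) (w : ℕ → α) (n : ℕ) : ℚ :=
  ∏ j ∈ range n, (rhoh θ w j)⁻¹

variable {θ : List α → ℕ} {w : ℕ → α}

lemma two_le_rhoh {A : NMDA α QA} (hA : A.ThetaNMDA θ) (w : ℕ → α) (j : ℕ) :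
    2 ≤ rhoh θ w j := by
  obtain ⟨r, hr⟩ := A.exists_finRun w (j + 1)
  have h1 := hA.2 w j r hr
  have h2 := two_le_disc hA.1 (hr.2 j (by omega))
  rw [h1] at h2
  exact h2

lemma qd_pos {A : NMDA α QA} (hA : A.ThetaNMDA θ) (w : ℕ → α) (n : ℕ) :
    0 < qd θ w n := by
  apply Finset.prod_pos
  intro j _
  have := two_le_rhoh hA w j
  positivity

lemma qd_zero : qd θ w 0 = 1 := by simp [qd]

lemma qd_succ (n : ℕ) : qd θ w (n + 1) = qd θ w n * (rhoh θ w n)⁻¹ := by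
  rw [qd, Finset.prod_range_succ]; rfl

lemma qd_cast (n : ℕ) : ((qd θ w n : ℚ) : ℝ) = dfac θ w n := by
  rw [qd, dfac]
  push_cast
  rfl

noncomputable def rvq (A : NMDA α QA) (θ : List α → ℕ) (w : ℕ → α) (r : ℕ → QA)
    (n : ℕ) : ℚ :=
  ∑ i ∈ range n, A.weight (r i) (w i) (r (i + 1)) * qd θ w i

lemma rvq_cast {A : NMDA α QA} (hT : A.TidyWith θ) {n : ℕ} {r : ℕ → QA}
    (h : A.FinRun w n r) : A.runVal w r n = ((rvq A θ w r n : ℚ) : ℝ) := by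
  rw [runVal_tidy hT h, rvq, Rat.cast_sum]
  refine Finset.sum_congr rfl fun i _ => ?_
  rw [Rat.cast_mul, qd_cast]

lemma rvq_succ {A : NMDA α QA} (r : ℕ → QA) (n : ℕ) :
    rvq A θ w r (n + 1) = rvq A θ w r n + A.weight (r n) (w n) (r (n + 1)) * qd θ w n := by
  rw [rvq, Finset.sum_range_succ]; rfl

noncomputable def cost (A : NMDA α QA) (θ : List α → ℕ) (w : ℕ → α) :
    ℕ → QA → WithTop ℚ
  | 0 => fun q => if q ∈ A.init then 0 else ⊤
  | n + 1 => fun q' => Finset.univ.inf fun q =>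
      if A.delta q (w n) q' then
        cost A θ w n q + ((A.weight q (w n) q' * qd θ w n : ℚ) : WithTop ℚ)
      else ⊤

lemma cost_zero (A : NMDA α QA) (q : QA) :
    cost A θ w 0 q = if q ∈ A.init then 0 else ⊤ := rfl

lemma cost_succ (A : NMDA α QA) (n : ℕ) (q' : QA) :
    cost A θ w (n + 1) q' = Finset.univ.inf fun q =>
      if A.delta q (w n) q' then
        cost A θ w n q + ((A.weight q (w n) q' * qd θ w n : ℚ) : WithTop ℚ)
      else ⊤ := rfl

lemma cost_le_rvq {A : NMDA α QA} {n : ℕ} {r : ℕ → QA} (h : A.FinRun w n r) :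
    cost A θ w n (r n) ≤ ((rvq A θ w r n : ℚ) : WithTop ℚ) := by
  induction n with
  | zero => simp [cost_zero, rvq, h.1]
  | succ n ih =>
    calc cost A θ w (n + 1) (r (n + 1))
        ≤ if A.delta (r n) (w n) (r (n + 1)) then
            cost A θ w n (r n) +
              ((A.weight (r n) (w n) (r (n + 1)) * qd θ w n : ℚ) : WithTop ℚ)
          else ⊤ := by
          rw [cost_succ]
          exact Finset.inf_le (Finset.mem_univ (r n))
      _ = cost A θ w n (r n) +
            ((A.weight (r n) (w n) (r (n + 1)) * qd θ w n : ℚ) : WithTop ℚ) :=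
          if_pos (h.2 n (by omega))
      _ ≤ ((rvq A θ w r n : ℚ) : WithTop ℚ) +
            ((A.weight (r n) (w n) (r (n + 1)) * qd θ w n : ℚ) : WithTop ℚ) :=
          add_le_add (ih (h.mono (by omega))) le_rfl
      _ = ((rvq A θ w r (n + 1) : ℚ) : WithTop ℚ) := by
          rw [← WithTop.coe_add, rvq_succ]

lemma cost_attained (A : NMDA α QA) (θ : List α → ℕ) (w : ℕ → α) (n : ℕ) :
    ∀ q, cost A θ w n q = ⊤ ∨ ∃ r, A.FinRun w n r ∧ r n = q ∧
      cost A θ w n q = ((rvq A θ w r n : ℚ) : WithTop ℚ) := by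
  induction n with
  | zero =>
    intro q
    by_cases h : q ∈ A.init
    · right
      exact ⟨fun _ => q, ⟨h, fun i hi => absurd hi (by omega)⟩, rfl, by
        simp [cost_zero, rvq, h]⟩
    · left
      simp [cost_zero, h]
  | succ n ih =>
    intro q'
    haveI : Nonempty QA := ⟨A.init_nonempty.choose⟩
    obtain ⟨q0, -, hq0⟩ := Finset.exists_mem_eq_inf Finset.univ Finset.univ_nonempty
      (fun q => if A.delta q (w n) q' then
        cost A θ w n q + ((A.weight q (w n) q' * qd θ w n : ℚ) : WithTop ℚ) else ⊤)
    rw [← cost_succ] at hq0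
    by_cases hd : A.delta q0 (w n) q'
    · rw [if_pos hd] at hq0
      rcases ih q0 with htop | ⟨r0, hr0, hr0n, hval⟩
      · left
        rw [hq0, htop, top_add]
      · right
        set r : ℕ → QA := fun i => if i = n + 1 then q' else r0 i with hrdef
        have hrn : ∀ i ≤ n, r i = r0 i := fun i hi => by
          simp only [hrdef]; rw [if_neg (by omega)]
        have hrl : r (n + 1) = q' := by simp [hrdef]
        refine ⟨r, ⟨?_, ?_⟩, hrl, ?_⟩
        · rw [hrn 0 (by omega)]; exact hr0.1
        · intro i hi
          rcases Nat.lt_or_ge i n with hin | hin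
          · rw [hrn i (by omega), hrn (i + 1) (by omega)]
            exact hr0.2 i hin
          · have hieq : i = n := by omega
            subst hieq
            rw [hrn i (by omega), hrl, hr0n]
            exact hd
        · have hsum : rvq A θ w r (n + 1) = rvq A θ w r0 n +
              A.weight q0 (w n) q' * qd θ w n := by
            rw [rvq_succ, hrn n (by omega), hrl, hr0n]
            congr 1
            rw [rvq, rvq]
            refine Finset.sum_congr rfl fun i hi => ?_
            have hi' := mem_range.mp hi
            rw [hrn i (by omega), hrn (i + 1) (by omega)]
          rw [hq0, hval, ← WithTop.coe_add, hsum]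
    · left
      rw [hq0, if_neg hd]

lemma inf_cost_ne_top (A : NMDA α QA) (θ : List α → ℕ) (w : ℕ → α) (n : ℕ) :
    Finset.univ.inf (cost A θ w n) ≠ ⊤ := by
  obtain ⟨r, hr⟩ := A.exists_finRun w n
  intro htop
  have h1 : Finset.univ.inf (cost A θ w n) ≤ cost A θ w n (r n) :=
    Finset.inf_le (Finset.mem_univ _)
  have h2 := (h1.trans (cost_le_rvq hr))
  rw [htop] at h2
  exact absurd h2 (by simp)

noncomputable def mval (A : NMDA α QA) (θ : List α → ℕ) (w : ℕ → α) (n : ℕ) : ℚ :=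
  WithTop.untopD 0 (Finset.univ.inf (cost A θ w n))

lemma mval_coe (A : NMDA α QA) (θ : List α → ℕ) (w : ℕ → α) (n : ℕ) :
    ((mval A θ w n : ℚ) : WithTop ℚ) = Finset.univ.inf (cost A θ w n) := by
  obtain ⟨m0, hm0⟩ := WithTop.ne_top_iff_exists.mp (inf_cost_ne_top A θ w n)
  rw [mval, ← hm0]
  rfl

lemma finVal_eq_mval {A : NMDA α QA} (hA : A.ThetaNMDA θ) (w : ℕ → α) (n : ℕ) :
    A.finVal w n = ((mval A θ w n : ℚ) : ℝ) := by
  haveI : Nonempty QA := ⟨A.init_nonempty.choose⟩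
  have hle : IsLeast {x : ℝ | ∃ r : ℕ → QA, A.FinRun w n r ∧ x = A.runVal w r n}
      ((mval A θ w n : ℚ) : ℝ) := by
    constructor
    · obtain ⟨q0, -, hq0⟩ := Finset.exists_mem_eq_inf Finset.univ Finset.univ_nonempty
        (cost A θ w n)
      have hne : cost A θ w n q0 ≠ ⊤ := by rw [← hq0]; exact inf_cost_ne_top A θ w n
      rcases cost_attained A θ w n q0 with h | ⟨r, hr, hrn, hval⟩
      · exact absurd h hne
      · refine ⟨r, hr, ?_⟩
        rw [rvq_cast hA.2 hr]
        have hq : ((mval A θ w n : ℚ) : WithTop ℚ) = ((rvq A θ w r n : ℚ) : WithTop ℚ) := by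
          rw [mval_coe, hq0, hval]
        have : mval A θ w n = rvq A θ w r n := by exact_mod_cast hq
        rw [this]
    · rintro x ⟨r, hr, rfl⟩
      rw [rvq_cast hA.2 hr]
      have h1 : ((mval A θ w n : ℚ) : WithTop ℚ) ≤ ((rvq A θ w r n : ℚ) : WithTop ℚ) := by
        rw [mval_coe]
        exact (Finset.inf_le (Finset.mem_univ (r n))).trans (cost_le_rvq hr)
      have h2 : mval A θ w n ≤ rvq A θ w r n := by exact_mod_cast h1
      exact_mod_cast h2
  rw [finVal]
  exact hle.csInf_eq



/-! ### Gap algebra -/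

lemma map_inf_eq {ι : Type} (s : Finset ι) (f : ι → WithTop ℚ) (φ : ℚ → ℚ)
    (hφ : Monotone φ) : (s.inf f).map φ = s.inf fun i => (f i).map φ := by
  classical
  induction s using Finset.cons_induction with
  | empty => simp
  | cons a s ha ih =>
    rw [Finset.inf_cons, Finset.inf_cons, ← ih]
    cases hx : f a with
    | top => simp
    | coe x =>
      cases hy : s.inf f with
      | top => simp
      | coe y =>
        show WithTop.map φ (min _ _) = min _ _
        rw [← WithTop.coe_min, WithTop.map_coe, WithTop.map_coe, WithTop.map_coe,
          ← WithTop.coe_min, hφ.map_min]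

noncomputable def gact (A : NMDA α QA) (θ : List α → ℕ) (w : ℕ → α) (n : ℕ) :
    QA → WithTop ℚ :=
  fun q => (cost A θ w n q).map (fun x => (x - mval A θ w n) / qd θ w n)

noncomputable def mact (A : NMDA α QA) (θ : List α → ℕ) (w : ℕ → α) (n : ℕ) : ℚ :=
  (mval A θ w (n + 1) - mval A θ w n) / qd θ w n

variable {A : NMDA α QA}

lemma phi_monotone (hA : A.ThetaNMDA θ) (n : ℕ) :
    Monotone (fun x : ℚ => (x - mval A θ w n) / qd θ w n) := by
  intro a b hab
  have h := qd_pos hA w n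
  exact (div_le_div_iff_of_pos_right h).mpr (sub_le_sub_right hab _)

lemma tf_gact (hA : A.ThetaNMDA θ) (n : ℕ) (q' : QA) :
    tf A (w n) (gact A θ w n) q' =
      (cost A θ w (n + 1) q').map (fun x => (x - mval A θ w n) / qd θ w n) := by
  rw [cost_succ, map_inf_eq _ _ _ (phi_monotone hA n), tf]
  refine Finset.inf_congr rfl fun q _ => ?_
  rw [entry]
  by_cases hd : A.delta q (w n) q'
  · rw [if_pos hd, if_pos hd]
    cases hc : cost A θ w n q with
    | top => simp [gact, hc]
    | coe x =>
      rw [gact]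
      simp only [hc, WithTop.map_coe, ← WithTop.coe_add]
      rw [WithTop.coe_inj]
      have h := (qd_pos hA w n).ne'
      field_simp
      ring
  · rw [if_neg hd, if_neg hd, WithTop.map_top]

lemma mf_gact (hA : A.ThetaNMDA θ) (n : ℕ) :
    mf A (w n) (gact A θ w n) = ((mact A θ w n : ℚ) : WithTop ℚ) := by
  rw [mf]
  have h1 : ∀ q' ∈ Finset.univ, tf A (w n) (gact A θ w n) q' =
      (cost A θ w (n + 1) q').map (fun x => (x - mval A θ w n) / qd θ w n) :=
    fun q' _ => tf_gact hA n q'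
  rw [Finset.inf_congr rfl h1, ← map_inf_eq _ _ _ (phi_monotone hA n), ← mval_coe,
    WithTop.map_coe]
  rfl

lemma gact_transport (hA : A.ThetaNMDA θ) (n : ℕ) (q' : QA) :
    gact A θ w (n + 1) q' = (tf A (w n) (gact A θ w n) q').map
      (fun y => rhoh θ w n * (y - mact A θ w n)) := by
  rw [tf_gact hA n q', gact]
  cases hc : cost A θ w (n + 1) q' with
  | top => simp
  | coe x =>
    rw [WithTop.map_coe, WithTop.map_coe, WithTop.map_coe, WithTop.coe_inj]
    have h0 := (qd_pos hA w n).ne'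
    have h2 := two_le_rhoh hA w n
    have h1 : rhoh θ w n ≠ 0 := by linarith
    rw [mact, qd_succ]
    field_simp
    ring

lemma exists_gact_zero (A : NMDA α QA) (θ : List α → ℕ) (w : ℕ → α) (n : ℕ) :
    ∃ q, gact A θ w n q = ((0 : ℚ) : WithTop ℚ) := by
  haveI : Nonempty QA := ⟨A.init_nonempty.choose⟩
  obtain ⟨q0, -, hq0⟩ := Finset.exists_mem_eq_inf Finset.univ Finset.univ_nonempty
    (cost A θ w n)
  refine ⟨q0, ?_⟩
  have h1 : cost A θ w n q0 = ((mval A θ w n : ℚ) : WithTop ℚ) := by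
    rw [mval_coe, ← hq0]
  rw [gact, h1, WithTop.map_coe]
  simp

lemma gcap_le_mono (n : ℕ) (q' : QA) :
    tf A (w n) (gact A θ w n) q' ≤ tf A (w n) (fun q => cap A (gact A θ w n q)) q' := by
  refine Finset.inf_mono_fun fun q _ => ?_
  rw [entry, entry]
  by_cases hd : A.delta q (w n) q'
  · rw [if_pos hd, if_pos hd]
    exact add_le_add (le_cap A _) le_rfl
  · rw [if_neg hd, if_neg hd]

lemma cap_of_le {x : WithTop ℚ} (h : x ≤ (Tq A : WithTop ℚ)) : cap A x = x :=
  if_pos h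

lemma Tq_pos (A : NMDA α QA) : 0 < Tq A := by
  have := Wq_nonneg A
  rw [Tq]; linarith

lemma mf_cap_le_W (n : ℕ) :
    mf A (w n) (fun q => cap A (gact A θ w n q)) ≤ ((Wq A : ℚ) : WithTop ℚ) := by
  obtain ⟨qs, hqs⟩ := exists_gact_zero A θ w n
  set q'' := nxt A qs (w n)
  calc mf A (w n) (fun q => cap A (gact A θ w n q))
      ≤ tf A (w n) (fun q => cap A (gact A θ w n q)) q'' :=
        Finset.inf_le (Finset.mem_univ _)
    _ ≤ entry A (w n) (fun q => cap A (gact A θ w n q)) qs q'' :=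
        Finset.inf_le (Finset.mem_univ _)
    _ ≤ ((Wq A : ℚ) : WithTop ℚ) := by
        rw [entry, if_pos (nxt_delta A qs (w n)), hqs, cap_of_le (by
          exact_mod_cast (Tq_pos A).le), ← WithTop.coe_add]
        rw [WithTop.coe_le_coe]
        have := abs_weight_le A qs (w n) q''
        have h2 := le_abs_self (A.weight qs (w n) q'')
        linarith

lemma mf_act_le_W (n : ℕ) :
    mf A (w n) (gact A θ w n) ≤ ((Wq A : ℚ) : WithTop ℚ) :=
  le_trans (Finset.inf_mono_fun fun q' _ => gcap_le_mono n q') (mf_cap_le_W n)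

lemma CAP1 (hA : A.ThetaNMDA θ) (n : ℕ) :
    mf A (w n) (fun q => cap A (gact A θ w n q)) = mf A (w n) (gact A θ w n) := by
  refine le_antisymm ?_ (Finset.inf_mono_fun fun q' _ => gcap_le_mono n q')
  rw [mf_gact hA n] at *
  have hmW : mact A θ w n ≤ Wq A := by
    have := mf_act_le_W (A := A) (θ := θ) (w := w) n
    rw [mf_gact hA n] at this
    exact_mod_cast this
  -- the actual inf is attained
  rcases mf_cases A (w n) (gact A θ w n) with htop | ⟨q1', hq1'⟩
  · rw [mf_gact hA n] at htop; exact absurd htop (by simp)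
  rw [mf_gact hA n] at hq1'
  rcases tf_cases A (w n) (gact A θ w n) q1' with htop | ⟨q1, hd1, v, hgv, htf⟩
  · rw [htop] at hq1'; exact absurd hq1'.symm (by simp)
  rw [htf] at hq1'
  have hmv : mact A θ w n = v + A.weight q1 (w n) q1' := by exact_mod_cast hq1'
  by_cases hvT : v ≤ Tq A
  · calc mf A (w n) (fun q => cap A (gact A θ w n q))
        ≤ tf A (w n) (fun q => cap A (gact A θ w n q)) q1' :=
          Finset.inf_le (Finset.mem_univ _)
      _ ≤ entry A (w n) (fun q => cap A (gact A θ w n q)) q1 q1' :=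
          Finset.inf_le (Finset.mem_univ _)
      _ ≤ ((mact A θ w n : ℚ) : WithTop ℚ) := by
          rw [entry, if_pos hd1, hgv, cap_of_le (by exact_mod_cast hvT),
            ← WithTop.coe_add, WithTop.coe_le_coe, hmv]
  · exfalso
    have habs := abs_weight_le A q1 (w n) q1'
    have h2 := neg_abs_le (A.weight q1 (w n) q1')
    rw [Tq] at hvT
    have hW := Wq_nonneg A
    rw [hmv] at hmW
    linarith

lemma CAP2 (hA : A.ThetaNMDA θ) (n : ℕ) (q' : QA) :
    cap A ((tf A (w n) (fun q => cap A (gact A θ w n q)) q').map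
      (fun y => rhoh θ w n * (y - mact A θ w n))) =
    cap A ((tf A (w n) (gact A θ w n) q').map
      (fun y => rhoh θ w n * (y - mact A θ w n))) := by
  have hmono := gcap_le_mono (A := A) (θ := θ) (w := w) n q'
  rcases tf_cases A (w n) (gact A θ w n) q' with htop | ⟨q1, hd1, v, hgv, htf⟩
  · rw [htop] at hmono ⊢
    have : tf A (w n) (fun q => cap A (gact A θ w n q)) q' = ⊤ := top_le_iff.mp hmono
    rw [this]
  · by_cases hvT : v ≤ Tq A
    · have heq : tf A (w n) (fun q => cap A (gact A θ w n q)) q' =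
          tf A (w n) (gact A θ w n) q' := by
        refine le_antisymm ?_ hmono
        calc tf A (w n) (fun q => cap A (gact A θ w n q)) q'
            ≤ entry A (w n) (fun q => cap A (gact A θ w n q)) q1 q' :=
              Finset.inf_le (Finset.mem_univ _)
          _ = tf A (w n) (gact A θ w n) q' := by
              rw [entry, if_pos hd1, hgv, cap_of_le (by exact_mod_cast hvT), htf,
                ← WithTop.coe_add]
      rw [heq]
    · -- large gap case: both sides are ⊤ after capping
      have hW := Wq_nonneg A
      have hmW : mact A θ w n ≤ Wq A := by
        have := mf_act_le_W (A := A) (θ := θ) (w := w) n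
        rw [mf_gact hA n] at this
        exact_mod_cast this
      have hρ := two_le_rhoh hA w n
      set t0 : ℚ := v + A.weight q1 (w n) q' with ht0def
      have htmact : mact A θ w n ≤ t0 := by
        have h1 : ((mact A θ w n : ℚ) : WithTop ℚ) ≤ tf A (w n) (gact A θ w n) q' := by
          rw [← mf_gact hA n]
          exact Finset.inf_le (Finset.mem_univ _)
        rw [htf] at h1
        exact_mod_cast h1
      have habs := abs_weight_le A q1 (w n) q'
      have h2 := neg_abs_le (A.weight q1 (w n) q')
      have hTq : Tq A = 4 * Wq A + 1 := rfl
      have hvT' : Tq A < v := by rw [hTq]; exact lt_of_not_ge hvT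
      have hbig : ∀ t1 : ℚ, t0 ≤ t1 → ¬(rhoh θ w n * (t1 - mact A θ w n) ≤ Tq A) := by
        intro t1 ht1
        rw [hTq] at hvT'
        have h3 : 2 * Wq A + 1 < t1 - mact A θ w n := by
          have ht0v : t0 = v + A.weight q1 (w n) q' := ht0def
          linarith
        have h4 : 2 * (t1 - mact A θ w n) ≤ rhoh θ w n * (t1 - mact A θ w n) := by
          nlinarith
        rw [hTq]
        nlinarith
      have hact : cap A ((tf A (w n) (gact A θ w n) q').map
          (fun y => rhoh θ w n * (y - mact A θ w n))) = ⊤ := by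
        rw [htf, WithTop.map_coe, cap, if_neg (by
          rw [WithTop.coe_le_coe]
          exact hbig t0 le_rfl)]
      rw [hact]
      cases hcapval : tf A (w n) (fun q => cap A (gact A θ w n q)) q' with
      | top => rw [WithTop.map_top, cap_top]
      | coe t1 =>
        have ht1 : t0 ≤ t1 := by
          rw [hcapval, htf] at hmono
          exact_mod_cast hmono
        rw [WithTop.map_coe, cap, if_neg (by
          rw [WithTop.coe_le_coe]
          exact hbig t1 ht1)]



/-! ### The deterministic automaton computes the minimal cost -/

noncomputable def dst (A : NMDA α QA) (hI : A.Integral) (w : ℕ → α) : ℕ → DetState A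
  | 0 => (A.init_nonempty.choose, g0 A)
  | n + 1 => dstep A hI (dst A hI w n) (w n)

lemma pilot_finRun (hI : A.Integral) (w : ℕ → α) (n : ℕ) :
    A.FinRun w n (fun i => (dst A hI w i).1) :=
  ⟨A.init_nonempty.choose_spec, fun i _ => nxt_delta A (dst A hI w i).1 (w i)⟩

lemma disc_pilot (hA : A.ThetaNMDA θ) (w : ℕ → α) (n : ℕ) :
    A.disc (dst A hA.1 w n).1 (w n) (nxt A (dst A hA.1 w n).1 (w n)) = rhoh θ w n :=
  hA.2 w n (fun i => (dst A hA.1 w i).1) (pilot_finRun hA.1 w (n + 1))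

lemma mval_zero (A : NMDA α QA) (θ : List α → ℕ) (w : ℕ → α) : mval A θ w 0 = 0 := by
  have h1 := mval_coe A θ w 0
  have h2 : Finset.univ.inf (cost A θ w 0) = ((0 : ℚ) : WithTop ℚ) := by
    apply le_antisymm
    · calc Finset.univ.inf (cost A θ w 0) ≤ cost A θ w 0 A.init_nonempty.choose :=
          Finset.inf_le (Finset.mem_univ _)
        _ = ((0 : ℚ) : WithTop ℚ) := by
          rw [cost_zero, if_pos A.init_nonempty.choose_spec]
          rfl
    · refine Finset.le_inf fun q _ => ?_
      by_cases h : q ∈ A.init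
      · simp [cost_zero, h]
      · simp [cost_zero, h]
  exact_mod_cast h1.trans h2

lemma outw_cap (hA : A.ThetaNMDA θ) (n : ℕ) :
    outw A (w n) (fun q => cap A (gact A θ w n q)) = mact A θ w n := by
  rw [outw, CAP1 hA n, mf_gact hA n]
  rfl

lemma dst_inv (hA : A.ThetaNMDA θ) (w : ℕ → α) : ∀ n q,
    ((dst A hA.1 w n).2).val q = cap A (gact A θ w n q) := by
  intro n
  induction n with
  | zero =>
    intro q
    show (if q ∈ A.init then (0 : WithTop ℚ) else ⊤) = _
    by_cases h : q ∈ A.init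
    · rw [if_pos h, gact, cost_zero, if_pos h]
      have : ((0 : ℚ) : WithTop ℚ).map
          (fun x => (x - mval A θ w 0) / qd θ w 0) = ((0 : ℚ) : WithTop ℚ) := by
        rw [WithTop.map_coe, mval_zero, qd_zero]
        norm_num
      rw [show ((0 : WithTop ℚ)) = ((0 : ℚ) : WithTop ℚ) from rfl, this,
        cap_of_le (by exact_mod_cast (Tq_pos A).le)]
    · rw [if_neg h, gact, cost_zero, if_neg h, WithTop.map_top, cap_top]
  | succ n ih =>
    intro q'
    have hg : ((dst A hA.1 w n).2).val = fun q => cap A (gact A θ w n q) := funext ih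
    show gnew A (A.disc (dst A hA.1 w n).1 (w n) (nxt A (dst A hA.1 w n).1 (w n)))
      (w n) ((dst A hA.1 w n).2).val q' = _
    rw [hg, disc_pilot hA w n, gnew, outw_cap hA n, CAP2 hA n q',
      ← gact_transport hA n q']

lemma dst_finRun (hI : A.Integral) (w : ℕ → α) (n : ℕ) :
    (detA A hI).FinRun w n (fun i => dst A hI w i) :=
  ⟨Set.mem_singleton_iff.mpr rfl, fun i _ => rfl⟩

lemma detA_tidy (hA : A.ThetaNMDA θ) : (detA A hA.1).TidyWith θ := by
  intro w n r h
  have hu := det_finRun_unique (detA_deterministic A hA.1) h (dst_finRun hA.1 w (n + 1))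
  show A.disc (r n).1 (w n) (nxt A (r n).1 (w n)) = _
  rw [hu n (by omega)]
  exact disc_pilot hA w n

lemma detA_theta (hA : A.ThetaNMDA θ) : (detA A hA.1).ThetaNMDA θ :=
  ⟨fun s a s' _ => hA.1 s.1 a (nxt A s.1 a) (nxt_delta A s.1 a), detA_tidy hA⟩

lemma mact_telescope (hA : A.ThetaNMDA θ) (w : ℕ → α) (n : ℕ) :
    ∑ i ∈ range n, mact A θ w i * qd θ w i = mval A θ w n := by
  induction n with
  | zero => simp [mval_zero]
  | succ n ih =>
    rw [Finset.sum_range_succ, ih, mact, div_mul_cancel₀ _ (qd_pos hA w n).ne']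
    ring

lemma detA_runVal (hA : A.ThetaNMDA θ) (w : ℕ → α) (n : ℕ) :
    (detA A hA.1).runVal w (fun i => dst A hA.1 w i) n = ((mval A θ w n : ℚ) : ℝ) := by
  rw [runVal_tidy (detA_tidy hA) (dst_finRun hA.1 w n), ← mact_telescope hA w n,
    Rat.cast_sum]
  refine Finset.sum_congr rfl fun i _ => ?_
  have hw : ((detA A hA.1).weight (dst A hA.1 w i) (w i) (dst A hA.1 w (i + 1)) : ℚ)
      = mact A θ w i := by
    show outw A (w i) ((dst A hA.1 w i).2).val = _
    rw [funext (dst_inv hA w i), outw_cap hA i]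
  rw [hw, Rat.cast_mul, qd_cast]

lemma detA_finVal (hA : A.ThetaNMDA θ) (w : ℕ → α) (n : ℕ) :
    (detA A hA.1).finVal w n = A.finVal w n := by
  rw [finVal_det (detA_deterministic A hA.1) (dst_finRun hA.1 w n),
    detA_runVal hA w n, finVal_eq_mval hA w n]


end Determinization

/-! ### Determinization (stub) -/

theorem exists_det {α QA : Type} [Fintype α] [Fintype QA] {θ : List α → ℕ}
    (A : NMDA α QA) (hA : A.ThetaNMDA θ) :
    ∃ (Q : Type) (_ : Fintype Q) (D : NMDA α Q), D.ThetaNMDA θ ∧ D.Deterministic ∧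
      ∀ w n, D.finVal w n = A.finVal w n := by
  haveI := finite_detState A
  exact ⟨DetState A, Fintype.ofFinite _, detA A hA.1, detA_theta hA,
    detA_deterministic A hA.1, fun w n => detA_finVal hA w n⟩

end NMDA

open NMDA Filter

/-- For every choice function `θ`, the class of `θ`-NMDAs is closed under min, max,
addition, subtraction, multiplication by a nonnegative rational constant, and negation,
both with respect to nonempty finite words and with respect to infinite words. -/
theorem theta_nmdas_closed_under_algebraic_operations
    {α QA QB : Type} [Fintype α] [Fintype QA] [Fintype QB]
    (θ : List α → ℕ) (A : NMDA α QA) (B : NMDA α QB)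
    (hA : A.ThetaNMDA θ) (hB : B.ThetaNMDA θ) :
    RealizesWith θ (fun w n => min (A.finVal w n) (B.finVal w n))
        (fun w => min (A.infVal w) (B.infVal w)) ∧
      RealizesWith θ (fun w n => max (A.finVal w n) (B.finVal w n))
        (fun w => max (A.infVal w) (B.infVal w)) ∧
      RealizesWith θ (fun w n => A.finVal w n + B.finVal w n)
        (fun w => A.infVal w + B.infVal w) ∧
      RealizesWith θ (fun w n => A.finVal w n - B.finVal w n)
        (fun w => A.infVal w - B.infVal w) ∧
      (∀ c : ℚ, 0 ≤ c →
        RealizesWith θ (fun w n => (c : ℝ) * A.finVal w n)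
          (fun w => (c : ℝ) * A.infVal w)) ∧
      RealizesWith θ (fun w n => -A.finVal w n) (fun w => -A.infVal w) := by
  have tA : ∀ w, Tendsto (A.finVal w) atTop (nhds (A.infVal w)) :=
    fun w => tendsto_finVal hA.1 w
  have tB : ∀ w, Tendsto (B.finVal w) atTop (nhds (B.infVal w)) :=
    fun w => tendsto_finVal hB.1 w
  refine ⟨?_, ?_, ?_, ?_, ?_, ?_⟩
  · -- min
    exact realizes_of (union A B) (union_theta hA hB)
      (fun w n => union_finVal hA hB w n) (fun w => (tA w).min (tB w))
  · -- max
    obtain ⟨QDA, iDA, DA, hDAθ, hDAdet, hDAval⟩ := exists_det A hA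
    obtain ⟨QDB, iDB, DB, hDBθ, hDBdet, hDBval⟩ := exists_det B hB
    letI := iDA; letI := iDB
    obtain ⟨QDU, iDU, DU, hDUθ, hDUdet, hDUval⟩ :=
      exists_det (union (negOf DA) (negOf DB))
        (union_theta (negOf_theta hDAθ) (negOf_theta hDBθ))
    letI := iDU
    refine realizes_of (negOf DU) (negOf_theta hDUθ) (fun w n => ?_)
      (fun w => (tA w).max (tB w))
    rw [negOf_finVal hDUdet, hDUval,
      union_finVal (negOf_theta hDAθ) (negOf_theta hDBθ),
      negOf_finVal hDAdet, negOf_finVal hDBdet, hDAval, hDBval,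
      min_neg_neg, neg_neg]
  · -- plus
    exact realizes_of (prodSum A B) (prodSum_theta hA hB)
      (fun w n => prodSum_finVal hA hB w n) (fun w => (tA w).add (tB w))
  · -- sub
    obtain ⟨QDB, iDB, DB, hDBθ, hDBdet, hDBval⟩ := exists_det B hB
    letI := iDB
    refine realizes_of (prodSum A (negOf DB)) (prodSum_theta hA (negOf_theta hDBθ))
      (fun w n => ?_) (fun w => (tA w).sub (tB w))
    rw [prodSum_finVal hA (negOf_theta hDBθ), negOf_finVal hDBdet, hDBval]
    ring
  · -- scale
    intro c hc
    exact realizes_of (scale c A) (scale_theta hA)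
      (fun w n => scale_finVal hc hA w n) (fun w => (tA w).const_mul (c : ℝ))
  · -- neg
    obtain ⟨QDA, iDA, DA, hDAθ, hDAdet, hDAval⟩ := exists_det A hA
    letI := iDA
    refine realizes_of (negOf DA) (negOf_theta hDAθ) (fun w n => ?_)
      (fun w => (tA w).neg)
    rw [negOf_finVal hDAdet, hDAval]
end

section
/- There exists a polynomial p such that for every choice function θ and all θ-NMDAs A and B over the same alphabet, there is a θ-NMDA C with C(w) = max(A(w), B(w)) for every nonempty finite word and every infinite word w, whose number of states is at most 2^{p(|A| + |B|)}, where the size |·| of an automaton is the maximum of its number of transitions and the maximal length of the binary representation of any weight or discount factor appearing in it (weights being given with a common denominator). -/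
open Classical in
/-- The size of an NMDA: the maximum of its number of transitions and the maximal
length of the binary representation of any weight or discount factor appearing in it
(numerator and denominator, weights being given with a common denominator). -/
noncomputable def NMDA.size {α Q : Type} (A : NMDA α Q) : ℕ :=
  max (Set.ncard {t : Q × α × Q | A.delta t.1 t.2.1 t.2.2})
    (⨆ t : Q × α × Q,
      if A.delta t.1 t.2.1 t.2.2 then
        max
          (max (Nat.size (A.weight t.1 t.2.1 t.2.2).num.natAbs)
            (Nat.size (A.weight t.1 t.2.1 t.2.2).den))
          (max (Nat.size (A.disc t.1 t.2.1 t.2.2).num.natAbs)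
            (Nat.size (A.disc t.1 t.2.1 t.2.2).den))
      else 0)

set_option maxHeartbeats 1000000

open Classical
namespace MaxC

def K (W Dm L : ℕ) : ℕ := 4 * L * Dm * W

noncomputable def Gset (W Dm L : ℕ) : Finset ℚ :=
  (Finset.Icc (-(K W Dm L : ℤ)) (K W Dm L : ℤ)).image fun k : ℤ => (k : ℚ) / (L : ℚ)

lemma mem_Gset_iff {W Dm L : ℕ} {x : ℚ} :
    x ∈ Gset W Dm L ↔ ∃ k : ℤ, |k| ≤ (K W Dm L : ℤ) ∧ x = (k : ℚ) / (L : ℚ) := by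
  unfold Gset
  rw [Finset.mem_image]
  constructor
  · rintro ⟨k, hk, rfl⟩
    rw [Finset.mem_Icc] at hk
    exact ⟨k, abs_le.2 ⟨by linarith [hk.1], hk.2⟩, rfl⟩
  · rintro ⟨k, hk, rfl⟩
    rw [abs_le] at hk
    exact ⟨k, Finset.mem_Icc.2 ⟨by linarith [hk.1], hk.2⟩, rfl⟩

lemma zero_mem_Gset (W Dm L : ℕ) : (0 : ℚ) ∈ Gset W Dm L := by
  rw [mem_Gset_iff]; exact ⟨0, by simp, by simp⟩

lemma abs_le_of_mem_Gset {W Dm L : ℕ} (hL1 : 1 ≤ L) {g : ℚ} (hg : g ∈ Gset W Dm L) :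
    |g| ≤ (4 * Dm * W : ℚ) := by
  rw [mem_Gset_iff] at hg
  obtain ⟨k, hk, rfl⟩ := hg
  have hL0 : (0 : ℚ) < (L : ℚ) := by exact_mod_cast hL1
  have hkq : |(k : ℚ)| ≤ ((K W Dm L : ℤ) : ℚ) := by exact_mod_cast hk
  rw [abs_div, abs_of_pos hL0, div_le_iff₀ hL0]
  calc |(k : ℚ)| ≤ ((K W Dm L : ℤ) : ℚ) := hkq
    _ = 4 * L * Dm * W := by push_cast [K]; ring
    _ = 4 * Dm * W * L := by ring

lemma good_branch {W Dm L : ℕ} (hL1 : 1 ≤ L) {g d wa wb : ℚ}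
    (hg : g ∈ Gset W Dm L)
    (hd : ∃ kd : ℤ, d = (kd : ℚ)) (hd2 : (0:ℚ) ≤ d) (hdD : d ≤ (Dm : ℚ))
    (hwa : ∃ ka : ℤ, (L : ℚ) * wa = (ka : ℚ)) (hwb : ∃ kb : ℤ, (L : ℚ) * wb = (kb : ℚ))
    (he : |g + wa - wb| ≤ (4 * W : ℚ)) :
    d * (g + wa - wb) ∈ Gset W Dm L := by
  rw [mem_Gset_iff] at hg ⊢
  obtain ⟨k, hk, rfl⟩ := hg
  obtain ⟨kd, rfl⟩ := hd
  obtain ⟨ka, hka⟩ := hwa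
  obtain ⟨kb, hkb⟩ := hwb
  have hL0 : (0 : ℚ) < (L : ℚ) := by exact_mod_cast hL1
  refine ⟨kd * (k + ka - kb), ?_, ?_⟩
  · -- bound
    have h1 : |((k : ℚ) + ka - kb)| ≤ (L : ℚ) * (4 * W) := by
      have heq : (L : ℚ) * ((k : ℚ) / L + wa - wb) = ((k : ℚ) + ka - kb) := by
        rw [← hka, ← hkb, mul_sub, mul_add, mul_div_cancel₀ _ hL0.ne']
      rw [← heq, abs_mul, abs_of_pos hL0]
      exact mul_le_mul_of_nonneg_left he hL0.le
    have h2 : |((kd : ℚ) * (k + ka - kb))| ≤ (Dm : ℚ) * ((L : ℚ) * (4 * W)) := by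
      rw [abs_mul]
      have hkd : |(kd : ℚ)| ≤ (Dm : ℚ) := by rwa [abs_of_nonneg hd2]
      exact mul_le_mul hkd h1 (abs_nonneg _) (by positivity)
    have h3 : |((kd * (k + ka - kb) : ℤ) : ℚ)| ≤ ((K W Dm L : ℤ) : ℚ) := by
      push_cast
      calc |((kd : ℚ) * ((k:ℚ) + ka - kb))| ≤ (Dm : ℚ) * ((L : ℚ) * (4 * W)) := h2
        _ = ((4 * L * Dm * W : ℕ) : ℚ) := by push_cast; ring
        _ = ((K W Dm L : ℤ) : ℚ) := by rw [K]; push_cast; ring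
    exact_mod_cast h3
  · -- value
    push_cast
    rw [← hka, ← hkb]
    rw [div_add' _ _ _ hL0.ne', div_sub' hL0.ne', eq_div_iff hL0.ne']
    field_simp


-- generic real algebra: one step of the max-tracking
lemma max_step {x y wa wb g q : ℝ} (hq : 0 < q) (hgap : g * q = x - y) :
    max x y + (max (wa + min g 0) (wb - max g 0)) * q = max (x + wa * q) (y + wb * q) := by
  rcases le_total g 0 with h | h
  · have hxy : x ≤ y := by nlinarith
    rw [min_eq_left h, max_eq_right h, max_eq_right hxy, sub_zero]
    have hx : x = y + g * q := by linarith
    rcases le_total (wa + g) wb with h3 | h3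
    · rw [max_eq_right h3, max_eq_right (by nlinarith)]
    · rw [max_eq_left h3, max_eq_left (by nlinarith)]
      linarith
  · have hxy : y ≤ x := by nlinarith
    rw [min_eq_right h, max_eq_left h, max_eq_left hxy, add_zero]
    have hy : y = x - g * q := by linarith
    rcases le_total wa (wb - g) with h3 | h3
    · rw [max_eq_right h3, max_eq_right (by nlinarith)]
      linarith
    · rw [max_eq_left h3, max_eq_left (by nlinarith)]

-- a discount factor of an integral NMDA on a transition is at least 2
lemma two_le_disc {α Q : Type} {A : NMDA α Q} (hI : A.Integral) {q a q'}
    (h : A.delta q a q') : (2 : ℚ) ≤ A.disc q a q' := by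
  obtain ⟨k, hk⟩ := hI q a q'  h
  have h1 : (1 : ℚ) < k := hk ▸ A.disc_gt_one q a q' h
  have : (1 : ℤ) < k := by exact_mod_cast h1
  rw [hk]
  exact_mod_cast this

-- telescoping of runVal
lemma runVal_succ {α Q : Type} (A : NMDA α Q) (w : ℕ → α) (r : ℕ → Q) (n : ℕ) :
    A.runVal w r (n + 1) = A.runVal w r n +
      (A.weight (r n) (w n) (r (n + 1)) : ℝ) *
        ∏ j ∈ Finset.range n, (1 / (A.disc (r j) (w j) (r (j + 1)) : ℝ)) := by
  unfold NMDA.runVal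
  rw [Finset.sum_range_succ]


variable {α QA QB : Type}

/-- mode type: either a tracked gap, or a committed winner (false = A wins, true = B wins) -/
def Md (W Dm L : ℕ) : Type := ({x // x ∈ Gset W Dm L}) ⊕ Bool

noncomputable instance (W Dm L : ℕ) : Fintype (Md W Dm L) := by
  unfold Md; infer_instance

open Classical in
/-- mode update -/
noncomputable def stepMode (W Dm L : ℕ) (d wa wb : ℚ) : Md W Dm L → Md W Dm L
  | .inr b => .inr b
  | .inl g =>
    if (4 * W : ℚ) < g.1 + wa - wb then .inr false
    else if g.1 + wa - wb < -(4 * W : ℚ) then .inr true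
    else if h : d * (g.1 + wa - wb) ∈ Gset W Dm L then .inl ⟨_, h⟩ else .inr false

variable (A : NMDA α QA) (B : NMDA α QB) (W Dm L : ℕ)

/-- the max automaton -/
noncomputable def C : NMDA α (QA × QB × Md W Dm L) where
  init := {p | p.1 ∈ A.init ∧ p.2.1 ∈ B.init ∧ p.2.2 = .inl ⟨0, zero_mem_Gset W Dm L⟩}
  init_nonempty := by
    obtain ⟨qa, ha⟩ := A.init_nonempty
    obtain ⟨qb, hb⟩ := B.init_nonempty
    exact ⟨(qa, qb, .inl ⟨0, zero_mem_Gset W Dm L⟩), ha, hb, rfl⟩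
  delta p a p' := A.delta p.1 a p'.1 ∧ B.delta p.2.1 a p'.2.1 ∧
    p'.2.2 = stepMode W Dm L (A.disc p.1 a p'.1) (A.weight p.1 a p'.1)
      (B.weight p.2.1 a p'.2.1) p.2.2
  complete p a := by
    obtain ⟨qa', ha⟩ := A.complete p.1 a
    obtain ⟨qb', hb⟩ := B.complete p.2.1 a
    exact ⟨(qa', qb', stepMode W Dm L (A.disc p.1 a qa') (A.weight p.1 a qa')
      (B.weight p.2.1 a qb') p.2.2), ha, hb, rfl⟩
  weight p a p' :=
    match p.2.2 with
    | .inl g => max (A.weight p.1 a p'.1 + min g.1 0) (B.weight p.2.1 a p'.2.1 - max g.1 0)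
    | .inr false => A.weight p.1 a p'.1
    | .inr true => B.weight p.2.1 a p'.2.1
  disc p a p' := A.disc p.1 a p'.1
  disc_gt_one p a p' h := A.disc_gt_one _ _ _ h.1

@[simp] lemma C_disc (p : QA × QB × Md W Dm L) (a : α) (p') :
    (C A B W Dm L).disc p a p' = A.disc p.1 a p'.1 := rfl

@[simp] lemma C_delta (p : QA × QB × Md W Dm L) (a : α) (p') :
    (C A B W Dm L).delta p a p' ↔ (A.delta p.1 a p'.1 ∧ B.delta p.2.1 a p'.2.1 ∧
      p'.2.2 = stepMode W Dm L (A.disc p.1 a p'.1) (A.weight p.1 a p'.1)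
        (B.weight p.2.1 a p'.2.1) p.2.2) := Iff.rfl

lemma C_weight_inl (p : QA × QB × Md W Dm L) (a : α) (p') (g) (hp : p.2.2 = .inl g) :
    (C A B W Dm L).weight p a p' =
      max (A.weight p.1 a p'.1 + min g.1 0) (B.weight p.2.1 a p'.2.1 - max g.1 0) := by
  show (match p.2.2 with
    | .inl g => max (A.weight p.1 a p'.1 + min g.1 0) (B.weight p.2.1 a p'.2.1 - max g.1 0)
    | .inr false => A.weight p.1 a p'.1
    | .inr true => B.weight p.2.1 a p'.2.1) = _
  rw [hp]

lemma C_weight_inrA (p : QA × QB × Md W Dm L) (a : α) (p') (hp : p.2.2 = .inr false) :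
    (C A B W Dm L).weight p a p' = A.weight p.1 a p'.1 := by
  show (match p.2.2 with
    | .inl g => max (A.weight p.1 a p'.1 + min g.1 0) (B.weight p.2.1 a p'.2.1 - max g.1 0)
    | .inr false => A.weight p.1 a p'.1
    | .inr true => B.weight p.2.1 a p'.2.1) = _
  rw [hp]

lemma C_weight_inrB (p : QA × QB × Md W Dm L) (a : α) (p') (hp : p.2.2 = .inr true) :
    (C A B W Dm L).weight p a p' = B.weight p.2.1 a p'.2.1 := by
  show (match p.2.2 with
    | .inl g => max (A.weight p.1 a p'.1 + min g.1 0) (B.weight p.2.1 a p'.2.1 - max g.1 0)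
    | .inr false => A.weight p.1 a p'.1
    | .inr true => B.weight p.2.1 a p'.2.1) = _
  rw [hp]

end MaxC


open Classical
namespace MaxC

variable {α QA QB : Type}

/-- inverse discount accumulation along (the A-projection of) a run -/
noncomputable def qinv (A : NMDA α QA) (w : ℕ → α) (r : ℕ → QA) (m : ℕ) : ℝ :=
  ∏ j ∈ Finset.range m, (1 / (A.disc (r j) (w j) (r (j + 1)) : ℝ))

lemma qinv_pos (A : NMDA α QA) (w : ℕ → α) (r : ℕ → QA) (m : ℕ)
    (hd : ∀ j < m, A.delta (r j) (w j) (r (j + 1))) : 0 < qinv A w r m := by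
  apply Finset.prod_pos
  intro j hj
  rw [Finset.mem_range] at hj
  have h := A.disc_gt_one _ _ _ (hd j hj)
  have : (1 : ℝ) < (A.disc (r j) (w j) (r (j + 1)) : ℝ) := by exact_mod_cast h
  positivity

lemma qinv_succ (A : NMDA α QA) (w : ℕ → α) (r : ℕ → QA) (m : ℕ) :
    qinv A w r (m + 1) = qinv A w r m * (1 / (A.disc (r m) (w m) (r (m + 1)) : ℝ)) := by
  unfold qinv
  rw [Finset.prod_range_succ]

variable (A : NMDA α QA) (B : NMDA α QB) (W Dm L : ℕ)

/-- the running invariant -/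
def Inv (w : ℕ → α) (t : ℕ → QA × QB × Md W Dm L) (m : ℕ) : Prop :=
  (∀ g, (t m).2.2 = .inl g →
    ((g.1 : ℝ) * qinv A w (fun i => (t i).1) m =
      A.runVal w (fun i => (t i).1) m - B.runVal w (fun i => (t i).2.1) m) ∧
    (C A B W Dm L).runVal w t m =
      max (A.runVal w (fun i => (t i).1) m) (B.runVal w (fun i => (t i).2.1) m)) ∧
  ((t m).2.2 = .inr false →
    8 * (W : ℝ) * qinv A w (fun i => (t i).1) m ≤
      A.runVal w (fun i => (t i).1) m - B.runVal w (fun i => (t i).2.1) m ∧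
    (C A B W Dm L).runVal w t m = A.runVal w (fun i => (t i).1) m) ∧
  ((t m).2.2 = .inr true →
    8 * (W : ℝ) * qinv A w (fun i => (t i).1) m ≤
      B.runVal w (fun i => (t i).2.1) m - A.runVal w (fun i => (t i).1) m ∧
    (C A B W Dm L).runVal w t m = B.runVal w (fun i => (t i).2.1) m)

lemma C_runVal_succ (w : ℕ → α) (t : ℕ → QA × QB × Md W Dm L) (m : ℕ) :
    (C A B W Dm L).runVal w t (m + 1) = (C A B W Dm L).runVal w t m +
      ((C A B W Dm L).weight (t m) (w m) (t (m + 1)) : ℝ) * qinv A w (fun i => (t i).1) m := by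
  rw [runVal_succ]
  rfl

section Invariant

variable (θ : List α → ℕ)
variable (hAint : A.Integral) (hTA : A.TidyWith θ) (hTB : B.TidyWith θ)
  (hW1 : 1 ≤ W) (hL1 : 1 ≤ L)
  (hWA : ∀ q a q', A.delta q a q' → |A.weight q a q'| ≤ (W : ℚ))
  (hWB : ∀ q a q', B.delta q a q' → |B.weight q a q'| ≤ (W : ℚ))
  (hDm : ∀ q a q', A.delta q a q' → A.disc q a q' ≤ (Dm : ℚ))
  (hLA : ∀ q a q', A.delta q a q' → ∃ k : ℤ, (L : ℚ) * A.weight q a q' = (k : ℚ))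
  (hLB : ∀ q a q', B.delta q a q' → ∃ k : ℤ, (L : ℚ) * B.weight q a q' = (k : ℚ))

include hAint hTA hTB hW1 hL1 hWA hWB hDm hLA hLB in
lemma invariant (w : ℕ → α) (t : ℕ → QA × QB × Md W Dm L)
    (ht0 : t 0 ∈ (C A B W Dm L).init)
    (n : ℕ) (hd : ∀ i < n, (C A B W Dm L).delta (t i) (w i) (t (i + 1))) :
    ∀ m, m ≤ n → Inv A B W Dm L w t m := by
  obtain ⟨hiA, hiB, h0⟩ := ht0
  -- discount factors of B along the run agree with those of A (same choice function)
  have hdisc_eq : ∀ j < n, (B.disc ((t j).2.1) (w j) ((t (j + 1)).2.1) : ℚ) =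
      A.disc ((t j).1) (w j) ((t (j + 1)).1) := by
    intro j hj
    have hfA : A.FinRun w (j + 1) (fun i => (t i).1) :=
      ⟨hiA, fun i hi => (hd i (lt_of_lt_of_le hi hj)).1⟩
    have hfB : B.FinRun w (j + 1) (fun i => (t i).2.1) :=
      ⟨hiB, fun i hi => (hd i (lt_of_lt_of_le hi hj)).2.1⟩
    rw [hTA w j _ hfA, hTB w j _ hfB]
  have hqB : ∀ m ≤ n, (∏ j ∈ Finset.range m,
      (1 / (B.disc ((t j).2.1) (w j) ((t (j + 1)).2.1) : ℝ))) = qinv A w (fun i => (t i).1) m := by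
    intro m hmn
    apply Finset.prod_congr rfl
    intro j hj
    rw [Finset.mem_range] at hj
    have := hdisc_eq j (lt_of_lt_of_le hj hmn)
    rw [show (B.disc ((t j).2.1) (w j) ((t (j + 1)).2.1) : ℝ) =
      (A.disc ((t j).1) (w j) ((t (j + 1)).1) : ℝ) by exact_mod_cast this]
  intro m
  induction m with
  | zero =>
    intro _
    refine ⟨?_, ?_, ?_⟩
    · intro g hg
      rw [h0] at hg
      have hg0 : g = ⟨0, zero_mem_Gset W Dm L⟩ := Sum.inl.inj hg.symm
      simp [NMDA.runVal, hg0]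
    · intro hg; rw [h0] at hg; simp at hg
    · intro hg; rw [h0] at hg; simp at hg
  | succ m ih =>
    intro hm
    have hmn : m < n := Nat.lt_of_succ_le hm
    have IH := ih (le_of_lt hmn)
    obtain ⟨hA, hB, hmode⟩ := hd m hmn
    set rA : ℕ → QA := fun i => (t i).1 with hrA
    set rB : ℕ → QB := fun i => (t i).2.1 with hrB
    set d : ℚ := A.disc (rA m) (w m) (rA (m + 1)) with hdd
    set wa : ℚ := A.weight (rA m) (w m) (rA (m + 1)) with hwa
    set wb : ℚ := B.weight (rB m) (w m) (rB (m + 1)) with hwb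
    have hd2 : (2 : ℚ) ≤ d := two_le_disc hAint hA
    have hdD : d ≤ (Dm : ℚ) := hDm _ _ _ hA
    have hdR : (2 : ℝ) ≤ (d : ℝ) := by exact_mod_cast hd2
    have hdpos : (0 : ℝ) < (d : ℝ) := by linarith
    have hwaW : |(wa : ℝ)| ≤ (W : ℝ) := by exact_mod_cast hWA _ _ _ hA
    have hwbW : |(wb : ℝ)| ≤ (W : ℝ) := by exact_mod_cast hWB _ _ _ hB
    have hWR : (1 : ℝ) ≤ (W : ℝ) := by exact_mod_cast hW1
    set q : ℝ := qinv A w rA m with hqdef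
    have hq : 0 < q := qinv_pos A w rA m (fun j hj => (hd j (lt_trans hj hmn)).1)
    have hqs : qinv A w rA (m + 1) = q * (1 / (d : ℝ)) := qinv_succ A w rA m
    have h1d : (1 : ℝ) / (d : ℝ) ≤ 1 / 2 := by
      apply one_div_le_one_div_of_le <;> linarith
    have h1dpos : (0 : ℝ) < 1 / (d : ℝ) := by positivity
    have hVA : A.runVal w rA (m + 1) = A.runVal w rA m + (wa : ℝ) * q := runVal_succ A w rA m
    have hVB : B.runVal w rB (m + 1) = B.runVal w rB m + (wb : ℝ) * q := by
      rw [runVal_succ]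
      rw [hqdef, ← hqB m (le_of_lt hmn)]
    have hVC : (C A B W Dm L).runVal w t (m + 1) = (C A B W Dm L).runVal w t m +
        ((C A B W Dm L).weight (t m) (w m) (t (m + 1)) : ℝ) * q := C_runVal_succ A B W Dm L w t m
    cases hmm : (t m).2.2 with
    | inl g =>
      obtain ⟨hgap, hvc⟩ := IH.1 g hmm
      set e : ℚ := g.1 + wa - wb with hedef
      have hmode' : (t (m + 1)).2.2 = stepMode W Dm L d wa wb (.inl g) := by
        rw [hmode, hmm]
      have heR : (e : ℝ) = (g.1 : ℝ) + (wa : ℝ) - (wb : ℝ) := by push_cast [hedef]; ring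
      -- the new max-value computation
      have hwC : ((C A B W Dm L).weight (t m) (w m) (t (m + 1)) : ℝ) =
          max ((wa : ℝ) + min ((g.1 : ℚ) : ℝ) 0) ((wb : ℝ) - max ((g.1 : ℚ) : ℝ) 0) := by
        rw [C_weight_inl A B W Dm L (t m) (w m) (t (m + 1)) g hmm]
        push_cast
        rfl
      have hmax : (C A B W Dm L).runVal w t (m + 1) =
          max (A.runVal w rA (m + 1)) (B.runVal w rB (m + 1)) := by
        rw [hVC, hvc, hwC, hVA, hVB]
        exact max_step hq hgap
      have hdiff : A.runVal w rA (m + 1) - B.runVal w rB (m + 1) = (e : ℝ) * q := by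
        rw [hVA, hVB, heR]
        linarith [hgap]
      rcases lt_or_ge (4 * (W : ℚ)) e with hc1 | hc1
      · -- switch to mode `A wins forever`
        have hm' : (t (m + 1)).2.2 = .inr false := by
          rw [hmode']
          simp only [stepMode]
          exact if_pos hc1
        have heW : 4 * (W : ℝ) < (e : ℝ) := by exact_mod_cast hc1
        have hdiffpos : 0 < A.runVal w rA (m + 1) - B.runVal w rB (m + 1) := by
          rw [hdiff]; nlinarith
        refine ⟨?_, ?_, ?_⟩
        · intro g' hg'; rw [hm'] at hg'; simp at hg'
        · intro _
          constructor
          · rw [hdiff, hqs]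
            have h8 : 8 * (W : ℝ) * (q * (1 / (d : ℝ))) ≤ 4 * (W : ℝ) * q := by
              have := mul_le_mul_of_nonneg_left h1d (by positivity : (0:ℝ) ≤ 8 * (W : ℝ) * q)
              calc 8 * (W : ℝ) * (q * (1 / (d : ℝ))) = 8 * (W : ℝ) * q * (1 / (d:ℝ)) := by ring
                _ ≤ 8 * (W : ℝ) * q * (1/2) := this
                _ = 4 * (W : ℝ) * q := by ring
            have h4 : 4 * (W : ℝ) * q ≤ (e : ℝ) * q :=
              mul_le_mul_of_nonneg_right heW.le hq.le
            linarith
          · rw [hmax, max_eq_left (by linarith)]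
        · intro hg'; rw [hm'] at hg'; exact Bool.noConfusion (Sum.inr.inj hg')
      rcases lt_or_ge e (-(4 * (W : ℚ))) with hc2 | hc2
      · -- switch to mode `B wins forever`
        have hm' : (t (m + 1)).2.2 = .inr true := by
          rw [hmode']
          simp only [stepMode]
          exact (if_neg (by linarith : ¬ (4 * (W : ℚ) < e))).trans (if_pos hc2)
        have heW : (e : ℝ) < -(4 * (W : ℝ)) := by exact_mod_cast hc2
        have hdiffpos : 0 < B.runVal w rB (m + 1) - A.runVal w rA (m + 1) := by
          nlinarith [hdiff]
        refine ⟨?_, ?_, ?_⟩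
        · intro g' hg'; rw [hm'] at hg'; simp at hg'
        · intro hg'; rw [hm'] at hg'; exact Bool.noConfusion (Sum.inr.inj hg')
        · intro _
          constructor
          · have h8 : 8 * (W : ℝ) * (q * (1 / (d : ℝ))) ≤ 4 * (W : ℝ) * q := by
              have := mul_le_mul_of_nonneg_left h1d (by positivity : (0:ℝ) ≤ 8 * (W : ℝ) * q)
              calc 8 * (W : ℝ) * (q * (1 / (d : ℝ))) = 8 * (W : ℝ) * q * (1 / (d:ℝ)) := by ring
                _ ≤ 8 * (W : ℝ) * q * (1/2) := this
                _ = 4 * (W : ℝ) * q := by ring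
            have h4 : 4 * (W : ℝ) * q ≤ -(e : ℝ) * q := by
              apply mul_le_mul_of_nonneg_right _ hq.le
              linarith
            rw [hqs]
            linarith [hdiff, h8, h4]
          · rw [hmax, max_eq_right (by linarith)]
      · -- stay in gap-tracking mode
        have hmem : d * e ∈ Gset W Dm L :=
          good_branch hL1 g.2 (hAint _ _ _ hA) (by linarith) hdD
            (hLA _ _ _ hA) (hLB _ _ _ hB) (abs_le.2 ⟨by linarith, hc1⟩)
        have hm' : (t (m + 1)).2.2 = .inl ⟨d * e, hmem⟩ := by
          rw [hmode']
          simp only [stepMode]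
          exact (if_neg (by linarith : ¬ (4 * (W : ℚ) < e))).trans
            ((if_neg (by linarith : ¬ (e < -(4 * (W : ℚ))))).trans (dif_pos hmem))
        refine ⟨?_, ?_, ?_⟩
        · intro g' hg'
          rw [hm'] at hg'
          have hgg : g' = ⟨d * e, hmem⟩ := Sum.inl.inj hg'.symm
          constructor
          · rw [hgg, hqs]
            have : ((d * e : ℚ) : ℝ) = (d : ℝ) * (e : ℝ) := by push_cast; ring
            rw [this, hdiff]
            field_simp
          · rw [hmax]
        · intro hg'; rw [hm'] at hg'; simp at hg'
        · intro hg'; rw [hm'] at hg'; simp at hg'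
    | inr b =>
      cases b with
      | false =>
        obtain ⟨hgap, hvc⟩ := IH.2.1 hmm
        have hm' : (t (m + 1)).2.2 = .inr false := by
          rw [hmode, hmm]
          rfl
        have hwC : ((C A B W Dm L).weight (t m) (w m) (t (m + 1)) : ℝ) = (wa : ℝ) := by
          rw [C_weight_inrA A B W Dm L (t m) (w m) (t (m + 1)) hmm]
        have hwab : -(2 * (W : ℝ)) ≤ (wa : ℝ) - (wb : ℝ) := by
          have h1 := abs_le.1 hwaW
          have h2 := abs_le.1 hwbW
          linarith
        refine ⟨?_, ?_, ?_⟩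
        · intro g' hg'; rw [hm'] at hg'; simp at hg'
        · intro _
          constructor
          · rw [hVA, hVB, hqs]
            have h8 : 8 * (W : ℝ) * (q * (1 / (d : ℝ))) ≤ 4 * (W : ℝ) * q := by
              have := mul_le_mul_of_nonneg_left h1d (by positivity : (0:ℝ) ≤ 8 * (W : ℝ) * q)
              calc 8 * (W : ℝ) * (q * (1 / (d : ℝ))) = 8 * (W : ℝ) * q * (1 / (d:ℝ)) := by ring
                _ ≤ 8 * (W : ℝ) * q * (1/2) := this
                _ = 4 * (W : ℝ) * q := by ring
            have h2W : -(2 * (W : ℝ)) * q ≤ ((wa : ℝ) - wb) * q :=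
              mul_le_mul_of_nonneg_right hwab hq.le
            nlinarith [hgap]
          · rw [hVC, hvc, hwC, hVA]
        · intro hg'; rw [hm'] at hg'; exact Bool.noConfusion (Sum.inr.inj hg')
      | true =>
        obtain ⟨hgap, hvc⟩ := IH.2.2 hmm
        have hm' : (t (m + 1)).2.2 = .inr true := by
          rw [hmode, hmm]
          rfl
        have hwC : ((C A B W Dm L).weight (t m) (w m) (t (m + 1)) : ℝ) = (wb : ℝ) := by
          rw [C_weight_inrB A B W Dm L (t m) (w m) (t (m + 1)) hmm]
        have hwab : -(2 * (W : ℝ)) ≤ (wb : ℝ) - (wa : ℝ) := by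
          have h1 := abs_le.1 hwaW
          have h2 := abs_le.1 hwbW
          linarith
        refine ⟨?_, ?_, ?_⟩
        · intro g' hg'; rw [hm'] at hg'; simp at hg'
        · intro hg'; rw [hm'] at hg'; exact Bool.noConfusion (Sum.inr.inj hg')
        · intro _
          constructor
          · rw [hVA, hVB, hqs]
            have h8 : 8 * (W : ℝ) * (q * (1 / (d : ℝ))) ≤ 4 * (W : ℝ) * q := by
              have := mul_le_mul_of_nonneg_left h1d (by positivity : (0:ℝ) ≤ 8 * (W : ℝ) * q)
              calc 8 * (W : ℝ) * (q * (1 / (d : ℝ))) = 8 * (W : ℝ) * q * (1 / (d:ℝ)) := by ring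
                _ ≤ 8 * (W : ℝ) * q * (1/2) := this
                _ = 4 * (W : ℝ) * q := by ring
            have h2W : -(2 * (W : ℝ)) * q ≤ ((wb : ℝ) - wa) * q :=
              mul_le_mul_of_nonneg_right hwab hq.le
            nlinarith [hgap]
          · rw [hVC, hvc, hwC, hVB]

end Invariant
end MaxC


open Classical
namespace MaxC

variable {α QA QB : Type}
variable (A : NMDA α QA) (B : NMDA α QB) (W Dm L : ℕ)

/-- the canonical C-run over a pair of runs -/
noncomputable def pairRun (w : ℕ → α) (rA : ℕ → QA) (rB : ℕ → QB) :
    ℕ → QA × QB × Md W Dm L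
  | 0 => (rA 0, rB 0, .inl ⟨0, zero_mem_Gset W Dm L⟩)
  | (i + 1) => (rA (i + 1), rB (i + 1),
      stepMode W Dm L (A.disc (rA i) (w i) (rA (i + 1))) (A.weight (rA i) (w i) (rA (i + 1)))
        (B.weight (rB i) (w i) (rB (i + 1))) (pairRun w rA rB i).2.2)

lemma pairRun_fst (w : ℕ → α) (rA : ℕ → QA) (rB : ℕ → QB) (i : ℕ) :
    (pairRun A B W Dm L w rA rB i).1 = rA i := by
  cases i <;> rfl

lemma pairRun_snd (w : ℕ → α) (rA : ℕ → QA) (rB : ℕ → QB) (i : ℕ) :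
    (pairRun A B W Dm L w rA rB i).2.1 = rB i := by
  cases i <;> rfl

lemma pairRun_delta (w : ℕ → α) (rA : ℕ → QA) (rB : ℕ → QB) (i : ℕ)
    (hA : A.delta (rA i) (w i) (rA (i + 1))) (hB : B.delta (rB i) (w i) (rB (i + 1))) :
    (C A B W Dm L).delta (pairRun A B W Dm L w rA rB i) (w i) (pairRun A B W Dm L w rA rB (i + 1)) := by
  refine ⟨?_, ?_, ?_⟩
  · rw [pairRun_fst, pairRun_fst]; exact hA
  · rw [pairRun_snd, pairRun_snd]; exact hB
  · show (pairRun A B W Dm L w rA rB (i+1)).2.2 = _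
    rw [show pairRun A B W Dm L w rA rB (i+1) = (rA (i + 1), rB (i + 1),
      stepMode W Dm L (A.disc (rA i) (w i) (rA (i + 1))) (A.weight (rA i) (w i) (rA (i + 1)))
        (B.weight (rB i) (w i) (rB (i + 1))) (pairRun A B W Dm L w rA rB i).2.2) from rfl]
    rw [pairRun_fst, pairRun_snd]

lemma pairRun_init (w : ℕ → α) (rA : ℕ → QA) (rB : ℕ → QB)
    (hA : rA 0 ∈ A.init) (hB : rB 0 ∈ B.init) :
    pairRun A B W Dm L w rA rB 0 ∈ (C A B W Dm L).init :=
  ⟨hA, hB, rfl⟩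

section Value

variable (θ : List α → ℕ)
variable (hAint : A.Integral) (hTA : A.TidyWith θ) (hTB : B.TidyWith θ)
  (hW1 : 1 ≤ W) (hL1 : 1 ≤ L)
  (hWA : ∀ q a q', A.delta q a q' → |A.weight q a q'| ≤ (W : ℚ))
  (hWB : ∀ q a q', B.delta q a q' → |B.weight q a q'| ≤ (W : ℚ))
  (hDm : ∀ q a q', A.delta q a q' → A.disc q a q' ≤ (Dm : ℚ))
  (hLA : ∀ q a q', A.delta q a q' → ∃ k : ℤ, (L : ℚ) * A.weight q a q' = (k : ℚ))
  (hLB : ∀ q a q', B.delta q a q' → ∃ k : ℤ, (L : ℚ) * B.weight q a q' = (k : ℚ))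

include hAint hTA hTB hW1 hL1 hWA hWB hDm hLA hLB in
/-- on any C-run, the C-value is the max of the two projected values -/
lemma value_eq (w : ℕ → α) (t : ℕ → QA × QB × Md W Dm L)
    (ht0 : t 0 ∈ (C A B W Dm L).init)
    (n : ℕ) (hd : ∀ i < n, (C A B W Dm L).delta (t i) (w i) (t (i + 1))) (m : ℕ) (hm : m ≤ n) :
    (C A B W Dm L).runVal w t m =
      max (A.runVal w (fun i => (t i).1) m) (B.runVal w (fun i => (t i).2.1) m) := by
  have hInv := invariant A B W Dm L θ hAint hTA hTB hW1 hL1 hWA hWB hDm hLA hLB w t ht0 n hd m hm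
  have hq : 0 < qinv A w (fun i => (t i).1) m :=
    qinv_pos A w _ m (fun j hj => (hd j (lt_of_lt_of_le hj hm)).1)
  have hWR : (1 : ℝ) ≤ (W : ℝ) := by exact_mod_cast hW1
  cases hmm : (t m).2.2 with
  | inl g => exact (hInv.1 g hmm).2
  | inr b =>
    cases b with
    | false =>
      obtain ⟨hgap, hvc⟩ := hInv.2.1 hmm
      rw [hvc, max_eq_left (by nlinarith)]
    | true =>
      obtain ⟨hgap, hvc⟩ := hInv.2.2 hmm
      rw [hvc, max_eq_right (by nlinarith)]

end Value
end MaxC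


open Classical
namespace MaxC

/-- infimum of the pointwise max of two sets -/
lemma sInf_max {SA SB : Set ℝ} (hAne : SA.Nonempty) (hBne : SB.Nonempty)
    (hAb : BddBelow SA) (hBb : BddBelow SB) :
    sInf {x | ∃ a ∈ SA, ∃ b ∈ SB, x = max a b} = max (sInf SA) (sInf SB) := by
  set S := {x | ∃ a ∈ SA, ∃ b ∈ SB, x = max a b} with hS
  have hSne : S.Nonempty := by
    obtain ⟨a, ha⟩ := hAne
    obtain ⟨b, hb⟩ := hBne
    exact ⟨max a b, a, ha, b, hb, rfl⟩
  obtain ⟨la, hla⟩ := id hAb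
  have hSb : BddBelow S := by
    refine ⟨la, ?_⟩
    rintro x ⟨a, ha, b, hb, rfl⟩
    exact le_trans (hla ha) (le_max_left a b)
  apply le_antisymm
  · rw [Real.sInf_le_iff hSb hSne]
    intro ε hε
    obtain ⟨a, ha, hal⟩ := (csInf_lt_iff hAb hAne).1
      (show sInf SA < sInf SA + ε by linarith)
    obtain ⟨b, hb, hbl⟩ := (csInf_lt_iff hBb hBne).1
      (show sInf SB < sInf SB + ε by linarith)
    refine ⟨max a b, ⟨a, ha, b, hb, rfl⟩, ?_⟩
    rcases le_total a b with h | h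
    · rw [max_eq_right h]
      calc b < sInf SB + ε := hbl
        _ ≤ max (sInf SA) (sInf SB) + ε := by
            have := le_max_right (sInf SA) (sInf SB); linarith
    · rw [max_eq_left h]
      calc a < sInf SA + ε := hal
        _ ≤ max (sInf SA) (sInf SB) + ε := by
            have := le_max_left (sInf SA) (sInf SB); linarith
  · apply le_csInf hSne
    rintro x ⟨a, ha, b, hb, rfl⟩
    exact max_le_max (csInf_le hAb ha) (csInf_le hBb hb)

variable {α Q : Type}

/-- geometric bound on partial sums -/
lemma abs_runVal_le (A : NMDA α Q) (w : ℕ → α) (r : ℕ → Q) (n : ℕ) (W' : ℝ) (hW0 : 0 ≤ W')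
    (hw : ∀ i < n, |(A.weight (r i) (w i) (r (i + 1)) : ℝ)| ≤ W')
    (hdisc : ∀ i < n, (2 : ℝ) ≤ (A.disc (r i) (w i) (r (i + 1)) : ℝ)) :
    |A.runVal w r n| ≤ 2 * W' := by
  have hterm : ∀ i ∈ Finset.range n,
      |(A.weight (r i) (w i) (r (i + 1)) : ℝ) *
        ∏ j ∈ Finset.range i, (1 / (A.disc (r j) (w j) (r (j + 1)) : ℝ))| ≤
        W' * (1 / 2) ^ i := by
    intro i hi
    rw [Finset.mem_range] at hi
    rw [abs_mul]
    have hprod : |∏ j ∈ Finset.range i, (1 / (A.disc (r j) (w j) (r (j + 1)) : ℝ))| ≤ (1/2 : ℝ) ^ i := by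
      rw [Finset.abs_prod]
      rw [show ((1:ℝ)/2) ^ i = ∏ _j ∈ Finset.range i, (1/2 : ℝ) by
        rw [Finset.prod_const, Finset.card_range]]
      apply Finset.prod_le_prod
      · intro j _; exact abs_nonneg _
      · intro j hj
        rw [Finset.mem_range] at hj
        have h2 := hdisc j (lt_of_lt_of_le hj (le_of_lt hi))
        rw [abs_of_pos (by positivity)]
        rw [div_le_div_iff₀ (by linarith) (by norm_num)]
        linarith
    calc |(A.weight (r i) (w i) (r (i + 1)) : ℝ)| *
        |∏ j ∈ Finset.range i, (1 / (A.disc (r j) (w j) (r (j + 1)) : ℝ))| ≤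
        W' * (1/2 : ℝ) ^ i := by
          apply mul_le_mul (hw i hi) hprod (abs_nonneg _) hW0
      _ = W' * (1 / 2) ^ i := rfl
  calc |A.runVal w r n| ≤ ∑ i ∈ Finset.range n, W' * (1 / 2 : ℝ) ^ i := by
        refine le_trans (Finset.abs_sum_le_sum_abs _ _) ?_
        exact Finset.sum_le_sum hterm
    _ = W' * ∑ i ∈ Finset.range n, (1 / 2 : ℝ) ^ i := by rw [Finset.mul_sum]
    _ ≤ W' * 2 := by
        apply mul_le_mul_of_nonneg_left _ hW0
        rw [geom_sum_eq (by norm_num) n]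
        have h1 : (0:ℝ) ≤ (1/2:ℝ)^n := by positivity
        have h2 : ((1/2:ℝ)^n - 1) / (1/2 - 1) = 2 - 2 * (1/2:ℝ)^n := by ring
        rw [h2]; linarith
    _ = 2 * W' := by ring

/-- geometric summability of run values -/
lemma summable_run (A : NMDA α Q) (w : ℕ → α) (r : ℕ → Q) (W' : ℝ) (hW0 : 0 ≤ W')
    (hw : ∀ i, |(A.weight (r i) (w i) (r (i + 1)) : ℝ)| ≤ W')
    (hdisc : ∀ i, (2 : ℝ) ≤ (A.disc (r i) (w i) (r (i + 1)) : ℝ)) :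
    Summable (fun i => (A.weight (r i) (w i) (r (i + 1)) : ℝ) *
      ∏ j ∈ Finset.range i, (1 / (A.disc (r j) (w j) (r (j + 1)) : ℝ))) := by
  apply Summable.of_norm_bounded (g := fun i => W' * (1 / 2 : ℝ) ^ i)
  · exact (summable_geometric_of_lt_one (by norm_num) (by norm_num)).mul_left W'
  · intro i
    rw [Real.norm_eq_abs, abs_mul]
    have hprod : |∏ j ∈ Finset.range i, (1 / (A.disc (r j) (w j) (r (j + 1)) : ℝ))| ≤ (1/2 : ℝ) ^ i := by
      rw [Finset.abs_prod]
      rw [show ((1:ℝ)/2) ^ i = ∏ _j ∈ Finset.range i, (1/2 : ℝ) by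
        rw [Finset.prod_const, Finset.card_range]]
      apply Finset.prod_le_prod
      · intro j _; exact abs_nonneg _
      · intro j _
        have h2 := hdisc j
        rw [abs_of_pos (by positivity)]
        rw [div_le_div_iff₀ (by linarith) (by norm_num)]
        linarith
    exact mul_le_mul (hw i) hprod (abs_nonneg _) hW0

/-- run values converge to the infinite run value -/
lemma tendsto_runVal (A : NMDA α Q) (w : ℕ → α) (r : ℕ → Q) (W' : ℝ) (hW0 : 0 ≤ W')
    (hw : ∀ i, |(A.weight (r i) (w i) (r (i + 1)) : ℝ)| ≤ W')
    (hdisc : ∀ i, (2 : ℝ) ≤ (A.disc (r i) (w i) (r (i + 1)) : ℝ)) :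
    Filter.Tendsto (fun n => A.runVal w r n) Filter.atTop (nhds (A.infRunVal w r)) :=
  ((summable_run A w r W' hW0 hw hdisc).hasSum).tendsto_sum_nat

/-- bound on the infinite run value -/
lemma abs_infRunVal_le (A : NMDA α Q) (w : ℕ → α) (r : ℕ → Q) (W' : ℝ) (hW0 : 0 ≤ W')
    (hw : ∀ i, |(A.weight (r i) (w i) (r (i + 1)) : ℝ)| ≤ W')
    (hdisc : ∀ i, (2 : ℝ) ≤ (A.disc (r i) (w i) (r (i + 1)) : ℝ)) :
    |A.infRunVal w r| ≤ 2 * W' := by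
  have hs := summable_run A w r W' hW0 hw hdisc
  have htend := tendsto_runVal A w r W' hW0 hw hdisc
  have hb : ∀ n, |A.runVal w r n| ≤ 2 * W' :=
    fun n => abs_runVal_le A w r n W' hW0 (fun i _ => hw i) (fun i _ => hdisc i)
  have h1 : A.infRunVal w r ≤ 2 * W' :=
    le_of_tendsto htend (Filter.Eventually.of_forall fun n => (abs_le.1 (hb n)).2)
  have h2 : -(2 * W') ≤ A.infRunVal w r :=
    ge_of_tendsto htend (Filter.Eventually.of_forall fun n => (abs_le.1 (hb n)).1)
  exact abs_le.2 ⟨h2, h1⟩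

/-- existence of an infinite run -/
lemma exists_infRun (A : NMDA α Q) (w : ℕ → α) : ∃ r : ℕ → Q, A.InfRun w r := by
  have h0 := A.init_nonempty
  let r : ℕ → Q := fun n => Nat.rec h0.choose (fun i q => (A.complete q (w i)).choose) n
  refine ⟨r, h0.choose_spec, fun i => ?_⟩
  exact (A.complete (r i) (w i)).choose_spec

end MaxC


open Classical
namespace MaxC

variable {α QA QB : Type}
variable (A : NMDA α QA) (B : NMDA α QB) (W Dm L : ℕ)

section Final

variable (θ : List α → ℕ)
variable (hAint : A.Integral) (hBint : B.Integral) (hTA : A.TidyWith θ) (hTB : B.TidyWith θ)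
  (hW1 : 1 ≤ W) (hL1 : 1 ≤ L)
  (hWA : ∀ q a q', A.delta q a q' → |A.weight q a q'| ≤ (W : ℚ))
  (hWB : ∀ q a q', B.delta q a q' → |B.weight q a q'| ≤ (W : ℚ))
  (hDm : ∀ q a q', A.delta q a q' → A.disc q a q' ≤ (Dm : ℚ))
  (hLA : ∀ q a q', A.delta q a q' → ∃ k : ℤ, (L : ℚ) * A.weight q a q' = (k : ℚ))
  (hLB : ∀ q a q', B.delta q a q' → ∃ k : ℤ, (L : ℚ) * B.weight q a q' = (k : ℚ))

include hAint hTA in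
lemma C_theta : (C A B W Dm L).ThetaNMDA θ := by
  constructor
  · rintro p a p' ⟨h1, -, -⟩
    exact hAint _ _ _ h1
  · rintro w n t ⟨ht0, htd⟩
    exact hTA w n (fun i => (t i).1) ⟨ht0.1, fun i hi => (htd i hi).1⟩

include hL1 hWA hWB in
lemma C_weight_bound {p : QA × QB × Md W Dm L} {a : α} {p'}
    (h : (C A B W Dm L).delta p a p') :
    |(C A B W Dm L).weight p a p'| ≤ (W : ℚ) + 4 * Dm * W := by
  obtain ⟨h1, h2, -⟩ := h
  have hwa := hWA _ _ _ h1
  have hwb := hWB _ _ _ h2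
  have hDW : (0:ℚ) ≤ 4 * Dm * W := by positivity
  cases hmm : p.2.2 with
  | inl g =>
    rw [C_weight_inl A B W Dm L p a p' g hmm]
    have hg := abs_le_of_mem_Gset hL1 g.2
    have hming : |min g.1 0| ≤ |g.1| := by
      rcases min_cases g.1 0 with ⟨h, -⟩ | ⟨h, -⟩ <;> rw [h] <;> simp [abs_nonneg]
    have hmaxg : |max g.1 0| ≤ |g.1| := by
      rcases max_cases g.1 0 with ⟨h, -⟩ | ⟨h, -⟩ <;> rw [h] <;> simp [abs_nonneg]
    refine le_trans (abs_max_le_max_abs_abs) (max_le ?_ ?_)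
    · calc |A.weight p.1 a p'.1 + min g.1 0| ≤ |A.weight p.1 a p'.1| + |min g.1 0| := abs_add_le _ _
        _ ≤ (W : ℚ) + 4 * Dm * W := add_le_add hwa (le_trans hming hg)
    · calc |B.weight p.2.1 a p'.2.1 - max g.1 0| ≤ |B.weight p.2.1 a p'.2.1| + |max g.1 0| :=
          abs_sub _ _
        _ ≤ (W : ℚ) + 4 * Dm * W := add_le_add hwb (le_trans hmaxg hg)
  | inr b =>
    cases b with
    | false =>
      rw [C_weight_inrA A B W Dm L p a p' hmm]
      calc |A.weight p.1 a p'.1| ≤ (W : ℚ) := hwa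
        _ ≤ (W : ℚ) + 4 * Dm * W := by linarith
    | true =>
      rw [C_weight_inrB A B W Dm L p a p' hmm]
      calc |B.weight p.2.1 a p'.2.1| ≤ (W : ℚ) := hwb
        _ ≤ (W : ℚ) + 4 * Dm * W := by linarith

include hAint hBint hTA hTB hW1 hL1 hWA hWB hDm hLA hLB in
lemma C_finVal (w : ℕ → α) (n : ℕ) :
    (C A B W Dm L).finVal w n = max (A.finVal w n) (B.finVal w n) := by
  have hWR : (0:ℝ) ≤ (W : ℝ) := by positivity
  -- set equality
  have hset : {x : ℝ | ∃ t, (C A B W Dm L).FinRun w n t ∧ x = (C A B W Dm L).runVal w t n} =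
      {x : ℝ | ∃ a ∈ {x : ℝ | ∃ r, A.FinRun w n r ∧ x = A.runVal w r n},
        ∃ b ∈ {x : ℝ | ∃ r, B.FinRun w n r ∧ x = B.runVal w r n}, x = max a b} := by
    ext x
    constructor
    · rintro ⟨t, ⟨ht0, htd⟩, rfl⟩
      refine ⟨A.runVal w (fun i => (t i).1) n, ⟨_, ⟨ht0.1, fun i hi => (htd i hi).1⟩, rfl⟩,
        B.runVal w (fun i => (t i).2.1) n, ⟨_, ⟨ht0.2.1, fun i hi => (htd i hi).2.1⟩, rfl⟩, ?_⟩
      exact value_eq A B W Dm L θ hAint hTA hTB hW1 hL1 hWA hWB hDm hLA hLB w t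
        ⟨ht0.1, ht0.2.1, ht0.2.2⟩ n htd n le_rfl
    · rintro ⟨a, ⟨rA, hrA, rfl⟩, b, ⟨rB, hrB, rfl⟩, rfl⟩
      set t := pairRun A B W Dm L w rA rB with ht
      have htrun : (C A B W Dm L).FinRun w n t :=
        ⟨pairRun_init A B W Dm L w rA rB hrA.1 hrB.1,
          fun i hi => pairRun_delta A B W Dm L w rA rB i (hrA.2 i hi) (hrB.2 i hi)⟩
      refine ⟨t, htrun, ?_⟩
      have hfst : (fun i => (t i).1) = rA := funext fun i => pairRun_fst A B W Dm L w rA rB i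
      have hsnd : (fun i => (t i).2.1) = rB := funext fun i => pairRun_snd A B W Dm L w rA rB i
      rw [value_eq A B W Dm L θ hAint hTA hTB hW1 hL1 hWA hWB hDm hLA hLB w t htrun.1 n
        htrun.2 n le_rfl, hfst, hsnd]
  -- nonemptiness and boundedness
  obtain ⟨ra, hra⟩ := exists_infRun A w
  obtain ⟨rb, hrb⟩ := exists_infRun B w
  have hAne : {x : ℝ | ∃ r, A.FinRun w n r ∧ x = A.runVal w r n}.Nonempty :=
    ⟨_, ra, ⟨hra.1, fun i _ => hra.2 i⟩, rfl⟩
  have hBne : {x : ℝ | ∃ r, B.FinRun w n r ∧ x = B.runVal w r n}.Nonempty :=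
    ⟨_, rb, ⟨hrb.1, fun i _ => hrb.2 i⟩, rfl⟩
  have hAb : BddBelow {x : ℝ | ∃ r, A.FinRun w n r ∧ x = A.runVal w r n} := by
    refine ⟨-(2 * (W : ℝ)), ?_⟩
    rintro x ⟨r, hr, rfl⟩
    refine (abs_le.1 (abs_runVal_le A w r n (W : ℝ) hWR ?_ ?_)).1
    · intro i hi; exact_mod_cast hWA _ _ _ (hr.2 i hi)
    · intro i hi; exact_mod_cast two_le_disc hAint (hr.2 i hi)
  have hBb : BddBelow {x : ℝ | ∃ r, B.FinRun w n r ∧ x = B.runVal w r n} := by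
    refine ⟨-(2 * (W : ℝ)), ?_⟩
    rintro x ⟨r, hr, rfl⟩
    refine (abs_le.1 (abs_runVal_le B w r n (W : ℝ) hWR ?_ ?_)).1
    · intro i hi; exact_mod_cast hWB _ _ _ (hr.2 i hi)
    · intro i hi; exact_mod_cast two_le_disc hBint (hr.2 i hi)
  rw [NMDA.finVal, NMDA.finVal, NMDA.finVal, hset]
  exact sInf_max hAne hBne hAb hBb

include hAint hBint hTA hTB hW1 hL1 hWA hWB hDm hLA hLB in
lemma C_infRunVal (w : ℕ → α) (t : ℕ → QA × QB × Md W Dm L)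
    (ht : (C A B W Dm L).InfRun w t) :
    (C A B W Dm L).infRunVal w t =
      max (A.infRunVal w (fun i => (t i).1)) (B.infRunVal w (fun i => (t i).2.1)) := by
  have hWR : (0:ℝ) ≤ (W : ℝ) := by positivity
  have hdA : ∀ i, A.delta ((t i).1) (w i) ((t (i+1)).1) := fun i => (ht.2 i).1
  have hdB : ∀ i, B.delta ((t i).2.1) (w i) ((t (i+1)).2.1) := fun i => (ht.2 i).2.1
  have htA := tendsto_runVal A w (fun i => (t i).1) (W : ℝ) hWR
    (fun i => by exact_mod_cast hWA _ _ _ (hdA i))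
    (fun i => by exact_mod_cast two_le_disc hAint (hdA i))
  have htB := tendsto_runVal B w (fun i => (t i).2.1) (W : ℝ) hWR
    (fun i => by exact_mod_cast hWB _ _ _ (hdB i))
    (fun i => by exact_mod_cast two_le_disc hBint (hdB i))
  have htC := tendsto_runVal (C A B W Dm L) w t (((W : ℚ) + 4 * Dm * W : ℚ) : ℝ)
    (by positivity)
    (fun i => by exact_mod_cast C_weight_bound A B W Dm L hL1 hWA hWB (ht.2 i))
    (fun i => by exact_mod_cast two_le_disc hAint (hdA i))
  have hmax : Filter.Tendsto (fun n => (C A B W Dm L).runVal w t n) Filter.atTop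
      (nhds (max (A.infRunVal w (fun i => (t i).1)) (B.infRunVal w (fun i => (t i).2.1)))) := by
    apply Filter.Tendsto.congr _ (htA.max htB)
    intro n
    exact (value_eq A B W Dm L θ hAint hTA hTB hW1 hL1 hWA hWB hDm hLA hLB w t ht.1 n
      (fun i _ => ht.2 i) n le_rfl).symm
  exact tendsto_nhds_unique htC hmax

include hAint hBint hTA hTB hW1 hL1 hWA hWB hDm hLA hLB in
lemma C_infVal (w : ℕ → α) :
    (C A B W Dm L).infVal w = max (A.infVal w) (B.infVal w) := by
  have hWR : (0:ℝ) ≤ (W : ℝ) := by positivity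
  have hset : {x : ℝ | ∃ t, (C A B W Dm L).InfRun w t ∧ x = (C A B W Dm L).infRunVal w t} =
      {x : ℝ | ∃ a ∈ {x : ℝ | ∃ r, A.InfRun w r ∧ x = A.infRunVal w r},
        ∃ b ∈ {x : ℝ | ∃ r, B.InfRun w r ∧ x = B.infRunVal w r}, x = max a b} := by
    ext x
    constructor
    · rintro ⟨t, ht, rfl⟩
      refine ⟨A.infRunVal w (fun i => (t i).1), ⟨_, ⟨ht.1.1, fun i => (ht.2 i).1⟩, rfl⟩,
        B.infRunVal w (fun i => (t i).2.1), ⟨_, ⟨ht.1.2.1, fun i => (ht.2 i).2.1⟩, rfl⟩, ?_⟩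
      exact C_infRunVal A B W Dm L θ hAint hBint hTA hTB hW1 hL1 hWA hWB hDm hLA hLB w t ht
    · rintro ⟨a, ⟨rA, hrA, rfl⟩, b, ⟨rB, hrB, rfl⟩, rfl⟩
      set t := pairRun A B W Dm L w rA rB with htdef
      have htrun : (C A B W Dm L).InfRun w t :=
        ⟨pairRun_init A B W Dm L w rA rB hrA.1 hrB.1,
          fun i => pairRun_delta A B W Dm L w rA rB i (hrA.2 i) (hrB.2 i)⟩
      refine ⟨t, htrun, ?_⟩
      have hfst : (fun i => (t i).1) = rA := funext fun i => pairRun_fst A B W Dm L w rA rB i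
      have hsnd : (fun i => (t i).2.1) = rB := funext fun i => pairRun_snd A B W Dm L w rA rB i
      rw [C_infRunVal A B W Dm L θ hAint hBint hTA hTB hW1 hL1 hWA hWB hDm hLA hLB w t htrun,
        hfst, hsnd]
  obtain ⟨ra, hra⟩ := exists_infRun A w
  obtain ⟨rb, hrb⟩ := exists_infRun B w
  have hAne : {x : ℝ | ∃ r, A.InfRun w r ∧ x = A.infRunVal w r}.Nonempty := ⟨_, ra, hra, rfl⟩
  have hBne : {x : ℝ | ∃ r, B.InfRun w r ∧ x = B.infRunVal w r}.Nonempty := ⟨_, rb, hrb, rfl⟩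
  have hAb : BddBelow {x : ℝ | ∃ r, A.InfRun w r ∧ x = A.infRunVal w r} := by
    refine ⟨-(2 * (W : ℝ)), ?_⟩
    rintro x ⟨r, hr, rfl⟩
    refine (abs_le.1 (abs_infRunVal_le A w r (W : ℝ) hWR ?_ ?_)).1
    · intro i; exact_mod_cast hWA _ _ _ (hr.2 i)
    · intro i; exact_mod_cast two_le_disc hAint (hr.2 i)
  have hBb : BddBelow {x : ℝ | ∃ r, B.InfRun w r ∧ x = B.infRunVal w r} := by
    refine ⟨-(2 * (W : ℝ)), ?_⟩
    rintro x ⟨r, hr, rfl⟩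
    refine (abs_le.1 (abs_infRunVal_le B w r (W : ℝ) hWR ?_ ?_)).1
    · intro i; exact_mod_cast hWB _ _ _ (hr.2 i)
    · intro i; exact_mod_cast two_le_disc hBint (hr.2 i)
  rw [NMDA.infVal, NMDA.infVal, NMDA.infVal, hset]
  exact sInf_max hAne hBne hAb hBb

end Final
end MaxC


open Classical
namespace MaxC

variable {α Q : Type}

lemma rat_abs_le_natAbs (q : ℚ) : |q| ≤ (q.num.natAbs : ℚ) := by
  have hden : (1 : ℚ) ≤ (q.den : ℚ) := by exact_mod_cast q.pos
  have h1 : |q| = |(q.num : ℚ)| / (q.den : ℚ) := by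
    rw [← Rat.num_div_den q, abs_div, abs_of_pos (by linarith : (0:ℚ) < (q.den:ℚ)),
      Rat.num_div_den]
  rw [h1]
  have h2 : |(q.num : ℚ)| = (q.num.natAbs : ℚ) := by
    rw [← Int.cast_abs, Int.abs_eq_natAbs, Int.cast_natCast]
  rw [h2]
  exact div_le_self (by positivity) hden

section SizeBounds

variable [Fintype α] [Fintype Q] (A : NMDA α Q)

open Classical in
lemma size_term_le {t : Q × α × Q} (h : A.delta t.1 t.2.1 t.2.2) :
    max
      (max (Nat.size (A.weight t.1 t.2.1 t.2.2).num.natAbs)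
        (Nat.size (A.weight t.1 t.2.1 t.2.2).den))
      (max (Nat.size (A.disc t.1 t.2.1 t.2.2).num.natAbs)
        (Nat.size (A.disc t.1 t.2.1 t.2.2).den)) ≤ A.size := by
  have hne : Nonempty (Q × α × Q) := ⟨t⟩
  have hb : BddAbove (Set.range fun t : Q × α × Q =>
      if A.delta t.1 t.2.1 t.2.2 then
        max
          (max (Nat.size (A.weight t.1 t.2.1 t.2.2).num.natAbs)
            (Nat.size (A.weight t.1 t.2.1 t.2.2).den))
          (max (Nat.size (A.disc t.1 t.2.1 t.2.2).num.natAbs)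
            (Nat.size (A.disc t.1 t.2.1 t.2.2).den))
      else 0) := (Set.finite_range _).bddAbove
  calc _ = (if A.delta t.1 t.2.1 t.2.2 then
        max
          (max (Nat.size (A.weight t.1 t.2.1 t.2.2).num.natAbs)
            (Nat.size (A.weight t.1 t.2.1 t.2.2).den))
          (max (Nat.size (A.disc t.1 t.2.1 t.2.2).num.natAbs)
            (Nat.size (A.disc t.1 t.2.1 t.2.2).den))
      else 0) := by rw [if_pos h]
    _ ≤ _ := le_trans (le_ciSup hb t) (le_max_right _ _)

lemma weight_abs_le {q a q'} (h : A.delta q a q') :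
    |A.weight q a q'| ≤ ((2 ^ A.size : ℕ) : ℚ) := by
  have h1 := size_term_le A (t := (q, a, q')) h
  have h2 : Nat.size (A.weight q a q').num.natAbs ≤ A.size :=
    le_trans (le_trans (le_max_left _ _) (le_max_left _ _)) h1
  have h3 : (A.weight q a q').num.natAbs < 2 ^ A.size :=
    Nat.size_le.1 h2
  calc |A.weight q a q'| ≤ ((A.weight q a q').num.natAbs : ℚ) := rat_abs_le_natAbs _
    _ ≤ ((2 ^ A.size : ℕ) : ℚ) := by exact_mod_cast h3.le

lemma den_le {q a q'} (h : A.delta q a q') : (A.weight q a q').den ≤ 2 ^ A.size := by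
  have h1 := size_term_le A (t := (q, a, q')) h
  have h2 : Nat.size (A.weight q a q').den ≤ A.size :=
    le_trans (le_trans (le_max_right _ _) (le_max_left _ _)) h1
  exact (Nat.size_le.1 h2).le

lemma disc_le {q a q'} (h : A.delta q a q') : A.disc q a q' ≤ ((2 ^ A.size : ℕ) : ℚ) := by
  have h1 := size_term_le A (t := (q, a, q')) h
  have h2 : Nat.size (A.disc q a q').num.natAbs ≤ A.size :=
    le_trans (le_trans (le_max_left _ _) (le_max_right _ _)) h1
  have h3 : (A.disc q a q').num.natAbs < 2 ^ A.size := Nat.size_le.1 h2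
  have h4 : |A.disc q a q'| ≤ ((2 ^ A.size : ℕ) : ℚ) :=
    le_trans (rat_abs_le_natAbs _) (by exact_mod_cast h3.le)
  exact le_trans (le_abs_self _) h4

lemma ncard_delta_le : Set.ncard {t : Q × α × Q | A.delta t.1 t.2.1 t.2.2} ≤ A.size :=
  le_max_left _ _

lemma card_states_le (a0 : α) : Fintype.card Q ≤ A.size := by
  refine le_trans ?_ (ncard_delta_le A)
  rw [← Nat.card_coe_set_eq, ← Nat.card_eq_fintype_card]
  apply Nat.card_le_card_of_injective
    (fun q => (⟨(q, a0, (A.complete q a0).choose), (A.complete q a0).choose_spec⟩ :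
      {t : Q × α × Q // A.delta t.1 t.2.1 t.2.2}))
  intro q1 q2 h
  exact congrArg (fun x => x.1.1) h

lemma card_alpha_le (q0 : Q) : Fintype.card α ≤ A.size := by
  refine le_trans ?_ (ncard_delta_le A)
  rw [← Nat.card_coe_set_eq, ← Nat.card_eq_fintype_card]
  apply Nat.card_le_card_of_injective
    (fun a => (⟨(q0, a, (A.complete q0 a).choose), (A.complete q0 a).choose_spec⟩ :
      {t : Q × α × Q // A.delta t.1 t.2.1 t.2.2}))
  intro a1 a2 h
  have := congrArg (fun x => x.1.2.1) h
  exact this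

end SizeBounds
end MaxC


open Classical
namespace MaxC

variable {α Q : Type}

open Classical in
/-- a common denominator for all weights of `A` -/
noncomputable def clcm [Fintype α] [Fintype Q] (A : NMDA α Q) : ℕ :=
  ∏ t : Q × α × Q, (if A.delta t.1 t.2.1 t.2.2 then (A.weight t.1 t.2.1 t.2.2).den else 1)

lemma one_le_clcm [Fintype α] [Fintype Q] (A : NMDA α Q) : 1 ≤ clcm A := by
  apply Finset.one_le_prod'
  intro t _
  split
  · exact (A.weight t.1 t.2.1 t.2.2).pos
  · exact le_rfl

lemma den_dvd_clcm [Fintype α] [Fintype Q] (A : NMDA α Q) {q a q'} (h : A.delta q a q') :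
    (A.weight q a q').den ∣ clcm A := by
  have := Finset.dvd_prod_of_mem
    (fun t : Q × α × Q => if A.delta t.1 t.2.1 t.2.2 then (A.weight t.1 t.2.1 t.2.2).den else 1)
    (Finset.mem_univ (q, a, q'))
  simp only at this
  rwa [if_pos h] at this

lemma clcm_le [Fintype α] [Fintype Q] (A : NMDA α Q) :
    clcm A ≤ (2 ^ A.size) ^ (Fintype.card (Q × α × Q)) := by
  calc clcm A ≤ ∏ _t : Q × α × Q, 2 ^ A.size := by
        apply Finset.prod_le_prod'
        intro t _
        split
        · exact den_le A (by assumption)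
        · exact Nat.one_le_two_pow
    _ = (2 ^ A.size) ^ (Fintype.card (Q × α × Q)) := by
        rw [Finset.prod_const, Finset.card_univ]

lemma mul_weight_int [Fintype α] [Fintype Q] (A : NMDA α Q) (L : ℕ) {q a q'}
    (h : A.delta q a q') (hdvd : (A.weight q a q').den ∣ L) :
    ∃ k : ℤ, (L : ℚ) * A.weight q a q' = (k : ℚ) := by
  obtain ⟨m, hm⟩ := hdvd
  refine ⟨(m : ℤ) * (A.weight q a q').num, ?_⟩
  have hden : ((A.weight q a q').den : ℚ) * A.weight q a q' = (A.weight q a q').num :=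
    Rat.den_mul_eq_num _
  rw [hm]
  push_cast
  rw [mul_comm ((A.weight q a q').den : ℚ) (m : ℚ), mul_assoc, hden]

lemma card_Gset_le (W Dm L : ℕ) : (Gset W Dm L).card ≤ 2 * K W Dm L + 1 := by
  refine le_trans Finset.card_image_le ?_
  rw [Int.card_Icc]
  have : ((K W Dm L : ℤ) + 1 - -(K W Dm L : ℤ)) = ((2 * K W Dm L + 1 : ℕ) : ℤ) := by
    push_cast; ring
  rw [this, Int.toNat_natCast]

lemma card_Md (W Dm L : ℕ) : Nat.card (Md W Dm L) = (Gset W Dm L).card + 2 := by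
  have h : Nat.card (Md W Dm L) = Nat.card ({x // x ∈ Gset W Dm L} ⊕ Bool) := rfl
  rw [h, Nat.card_sum, Nat.card_eq_fintype_card, Fintype.card_coe,
    Nat.card_eq_fintype_card, Fintype.card_bool]

end MaxC


/-- The size blow-up of the max operation on tidy NMDAs is at most single-exponential:
there is a polynomial `p` such that for every choice function `θ` and all `θ`-NMDAs
`A` and `B` over the same alphabet, some `θ`-NMDA with at most `2 ^ p(|A| + |B|)` states
computes `max(A, B)` on all nonempty finite words and all infinite words. -/
theorem tidy_nmda_max_single_exponential_blowup :
    ∃ p : Polynomial ℕ,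
      ∀ (α : Type) (_ : Fintype α) (θ : List α → ℕ)
        (QA QB : Type) (_ : Fintype QA) (_ : Fintype QB)
        (A : NMDA α QA) (B : NMDA α QB),
        A.ThetaNMDA θ → B.ThetaNMDA θ →
          ∃ (QC : Type) (_ : Fintype QC) (C : NMDA α QC),
            C.ThetaNMDA θ ∧
              (∀ (w : ℕ → α) (n : ℕ), 0 < n →
                C.finVal w n = max (A.finVal w n) (B.finVal w n)) ∧
              (∀ w : ℕ → α, C.infVal w = max (A.infVal w) (B.infVal w)) ∧
              Nat.card QC ≤ 2 ^ p.eval (A.size + B.size) := by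
  use Polynomial.C 2 * Polynomial.X ^ 4 + Polynomial.C 4 * Polynomial.X + Polynomial.C 4
  intro α instα θ QA QB instQA instQB A B hA hB
  have hpeval : ∀ s : ℕ,
      (Polynomial.C 2 * Polynomial.X ^ 4 + Polynomial.C 4 * Polynomial.X +
        Polynomial.C 4 : Polynomial ℕ).eval s = 2 * s ^ 4 + 4 * s + 4 := by
    intro s; simp
  rcases isEmpty_or_nonempty α with hemp | hne
  · -- empty alphabet: trivial automaton
    refine ⟨PUnit, inferInstance, ⟨Set.univ, ⟨PUnit.unit, trivial⟩, fun _ _ _ => True,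
      fun q a => ⟨q, trivial⟩, fun _ _ _ => 0, fun _ _ _ => 2, fun _ _ _ _ => by norm_num⟩,
      ⟨fun q a q' _ => ⟨2, by norm_num⟩, fun w n r _ => (hemp.false (w 0)).elim⟩,
      fun w _ _ => (hemp.false (w 0)).elim, fun w => (hemp.false (w 0)).elim, ?_⟩
    simp [Nat.card_unique]
    exact Nat.one_le_two_pow
  · -- main case
    obtain ⟨hAint, hTA⟩ := hA
    obtain ⟨hBint, hTB⟩ := hB
    set s : ℕ := A.size + B.size with hs
    set W : ℕ := 2 ^ s with hW
    set Dm : ℕ := 2 ^ s with hDmdef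
    set L : ℕ := MaxC.clcm A * MaxC.clcm B with hLdef
    have hW1 : 1 ≤ W := Nat.one_le_two_pow
    have hL1 : 1 ≤ L := Nat.one_le_iff_ne_zero.2 (by
      have := MaxC.one_le_clcm A
      have := MaxC.one_le_clcm B
      positivity)
    have hpowA : ((2 ^ A.size : ℕ) : ℚ) ≤ ((W : ℕ) : ℚ) := by
      have : (2 : ℕ) ^ A.size ≤ 2 ^ s := Nat.pow_le_pow_right (by norm_num) (Nat.le_add_right _ _)
      exact_mod_cast this
    have hpowB : ((2 ^ B.size : ℕ) : ℚ) ≤ ((W : ℕ) : ℚ) := by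
      have : (2 : ℕ) ^ B.size ≤ 2 ^ s := Nat.pow_le_pow_right (by norm_num) (Nat.le_add_left _ _)
      exact_mod_cast this
    have hWA : ∀ q a q', A.delta q a q' → |A.weight q a q'| ≤ (W : ℚ) :=
      fun q a q' h => le_trans (MaxC.weight_abs_le A h) hpowA
    have hWB : ∀ q a q', B.delta q a q' → |B.weight q a q'| ≤ (W : ℚ) :=
      fun q a q' h => le_trans (MaxC.weight_abs_le B h) hpowB
    have hDm : ∀ q a q', A.delta q a q' → A.disc q a q' ≤ (Dm : ℚ) :=
      fun q a q' h => le_trans (MaxC.disc_le A h) hpowA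
    have hLA : ∀ q a q', A.delta q a q' → ∃ k : ℤ, (L : ℚ) * A.weight q a q' = (k : ℚ) :=
      fun q a q' h => MaxC.mul_weight_int A L h
        (dvd_mul_of_dvd_left (MaxC.den_dvd_clcm A h) _)
    have hLB : ∀ q a q', B.delta q a q' → ∃ k : ℤ, (L : ℚ) * B.weight q a q' = (k : ℚ) :=
      fun q a q' h => MaxC.mul_weight_int B L h
        (dvd_mul_of_dvd_right (MaxC.den_dvd_clcm B h) _)
    refine ⟨QA × QB × MaxC.Md W Dm L, inferInstance, MaxC.C A B W Dm L,
      MaxC.C_theta A B W Dm L θ hAint hTA, ?_, ?_, ?_⟩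
    · intro w n _
      exact MaxC.C_finVal A B W Dm L θ hAint hBint hTA hTB hW1 hL1 hWA hWB hDm hLA hLB w n
    · intro w
      exact MaxC.C_infVal A B W Dm L θ hAint hBint hTA hTB hW1 hL1 hWA hWB hDm hLA hLB w
    · -- cardinality bound
      obtain ⟨q0A, -⟩ := A.init_nonempty
      obtain ⟨q0B, -⟩ := B.init_nonempty
      have a0 : α := Classical.arbitrary α
      have hcA : Fintype.card QA ≤ s := le_trans (MaxC.card_states_le A a0) (Nat.le_add_right _ _)
      have hcB : Fintype.card QB ≤ s := le_trans (MaxC.card_states_le B a0) (Nat.le_add_left _ _)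
      have hcαA : Fintype.card α ≤ s := le_trans (MaxC.card_alpha_le A q0A) (Nat.le_add_right _ _)
      have hNA : Fintype.card (QA × α × QA) ≤ s ^ 3 := by
        rw [Fintype.card_prod, Fintype.card_prod]
        calc Fintype.card QA * (Fintype.card α * Fintype.card QA) ≤ s * (s * s) :=
              Nat.mul_le_mul hcA (Nat.mul_le_mul hcαA hcA)
          _ = s ^ 3 := by ring
      have hNB : Fintype.card (QB × α × QB) ≤ s ^ 3 := by
        rw [Fintype.card_prod, Fintype.card_prod]
        calc Fintype.card QB * (Fintype.card α * Fintype.card QB) ≤ s * (s * s) :=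
              Nat.mul_le_mul hcB (Nat.mul_le_mul hcαA hcB)
          _ = s ^ 3 := by ring
      have hclcmA : MaxC.clcm A ≤ 2 ^ (s ^ 4) := by
        calc MaxC.clcm A ≤ (2 ^ A.size) ^ (Fintype.card (QA × α × QA)) := MaxC.clcm_le A
          _ ≤ (2 ^ s) ^ (Fintype.card (QA × α × QA)) :=
              Nat.pow_le_pow_left (Nat.pow_le_pow_right (by norm_num) (Nat.le_add_right _ _)) _
          _ ≤ (2 ^ s) ^ (s ^ 3) := Nat.pow_le_pow_right Nat.one_le_two_pow hNA
          _ = 2 ^ (s ^ 4) := by rw [← pow_mul]; ring_nf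
      have hclcmB : MaxC.clcm B ≤ 2 ^ (s ^ 4) := by
        calc MaxC.clcm B ≤ (2 ^ B.size) ^ (Fintype.card (QB × α × QB)) := MaxC.clcm_le B
          _ ≤ (2 ^ s) ^ (Fintype.card (QB × α × QB)) :=
              Nat.pow_le_pow_left (Nat.pow_le_pow_right (by norm_num) (Nat.le_add_left _ _)) _
          _ ≤ (2 ^ s) ^ (s ^ 3) := Nat.pow_le_pow_right Nat.one_le_two_pow hNB
          _ = 2 ^ (s ^ 4) := by rw [← pow_mul]; ring_nf
      have hL : L ≤ 2 ^ (2 * s ^ 4) := by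
        calc L = MaxC.clcm A * MaxC.clcm B := rfl
          _ ≤ 2 ^ (s ^ 4) * 2 ^ (s ^ 4) := Nat.mul_le_mul hclcmA hclcmB
          _ = 2 ^ (2 * s ^ 4) := by rw [← pow_add]; ring_nf
      have hK : MaxC.K W Dm L ≤ 2 ^ (2 * s ^ 4 + 2 * s + 2) := by
        show 4 * L * Dm * W ≤ _
        calc 4 * L * Dm * W ≤ 4 * 2 ^ (2 * s ^ 4) * 2 ^ s * 2 ^ s :=
              Nat.mul_le_mul (Nat.mul_le_mul (Nat.mul_le_mul le_rfl hL) le_rfl) le_rfl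
          _ = 2 ^ 2 * 2 ^ (2 * s ^ 4) * 2 ^ s * 2 ^ s := by norm_num
          _ = 2 ^ (2 + 2 * s ^ 4 + s + s) := by rw [← pow_add, ← pow_add, ← pow_add]
          _ = 2 ^ (2 * s ^ 4 + 2 * s + 2) := by ring_nf
      have hK4 : 4 ≤ MaxC.K W Dm L := by
        show 4 ≤ 4 * L * Dm * W
        calc 4 = 4 * 1 * 1 * 1 := by norm_num
          _ ≤ 4 * L * Dm * W :=
              Nat.mul_le_mul (Nat.mul_le_mul (Nat.mul_le_mul le_rfl hL1) Nat.one_le_two_pow)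
                Nat.one_le_two_pow
      have hG : Nat.card (MaxC.Md W Dm L) ≤ 2 ^ (2 * s ^ 4 + 2 * s + 4) := by
        rw [MaxC.card_Md]
        calc (MaxC.Gset W Dm L).card + 2 ≤ (2 * MaxC.K W Dm L + 1) + 2 := by
              have := MaxC.card_Gset_le W Dm L; omega
          _ ≤ 4 * MaxC.K W Dm L := by omega
          _ ≤ 4 * 2 ^ (2 * s ^ 4 + 2 * s + 2) := Nat.mul_le_mul le_rfl hK
          _ = 2 ^ 2 * 2 ^ (2 * s ^ 4 + 2 * s + 2) := by norm_num
          _ = 2 ^ (2 + (2 * s ^ 4 + 2 * s + 2)) := by rw [← pow_add]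
          _ = 2 ^ (2 * s ^ 4 + 2 * s + 4) := by ring_nf
      have hsle : s ≤ 2 ^ s := Nat.le_of_lt (Nat.lt_two_pow_self (n := s))
      calc Nat.card (QA × QB × MaxC.Md W Dm L)
          = Fintype.card QA * (Fintype.card QB * Nat.card (MaxC.Md W Dm L)) := by
            rw [Nat.card_prod, Nat.card_prod, Nat.card_eq_fintype_card, Nat.card_eq_fintype_card]
        _ ≤ 2 ^ s * (2 ^ s * 2 ^ (2 * s ^ 4 + 2 * s + 4)) :=
            Nat.mul_le_mul (le_trans hcA hsle)
              (Nat.mul_le_mul (le_trans hcB hsle) hG)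
        _ = 2 ^ (s + (s + (2 * s ^ 4 + 2 * s + 4))) := by rw [← pow_add, ← pow_add]
        _ = 2 ^ (2 * s ^ 4 + 4 * s + 4) := by ring_nf
        _ = 2 ^ (Polynomial.C 2 * Polynomial.X ^ 4 + Polynomial.C 4 * Polynomial.X +
              Polynomial.C 4 : Polynomial ℕ).eval s := by rw [hpeval]
end

section
/- For every integer λ ≥ 2 and every nondeterministic finite automaton (NFA) A over a finite alphabet Σ with n states, there exists a λ-NDA Ã with n + 2 states such that for every nonempty finite word u ∈ Σ⁺: Ã(u) = −1/λ^{|u|} if u is accepted by A, and Ã(u) = 1/λ^{|u|} if u is not accepted by A. In particular, u is accepted by A if and only if Ã(u) < 0. -/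
open Classical in
/-- Sign function: 0 on the new initial state, -1 on accepting NFA states, 1 otherwise. -/
noncomputable def ndaF {α Q : Type} (N : NFA α Q) : Option (Option Q) → ℚ
  | none => 0
  | some none => 1
  | some (some q) => if q ∈ N.accept then -1 else 1

def ndaDelta {α Q : Type} (N : NFA α Q) :
    Option (Option Q) → α → Option (Option Q) → Prop
  | _, _, some none => True
  | none, a, some (some p) => ∃ q0 ∈ N.start, p ∈ N.step q0 a
  | some (some s), a, some (some p) => p ∈ N.step s a
  | _, _, _ => False

noncomputable def theNDA {α Q : Type} (N : NFA α Q) (l : ℕ) (hl : 2 ≤ l) :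
    NMDA α (Option (Option Q)) where
  init := {none}
  init_nonempty := ⟨none, rfl⟩
  delta := ndaDelta N
  complete := fun q _ => ⟨some none, by rcases q with _ | (_ | q) <;> trivial⟩
  weight := fun q _ q' => ndaF N q' / l - ndaF N q
  disc := fun _ _ _ => l
  disc_gt_one := fun _ _ _ _ => by show (1:ℚ) < (l:ℚ); exact_mod_cast lt_of_lt_of_le one_lt_two hl

/-- NFA eval membership ↔ existence of a run. -/
lemma nfa_eval_iff {α Q : Type} (N : NFA α Q) (S : Set Q) (w : ℕ → α) :
    ∀ (n : ℕ) (q : Q), q ∈ N.evalFrom S (List.ofFn fun i : Fin n => w i.val) ↔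
      ∃ r : ℕ → Q, r 0 ∈ S ∧ (∀ i < n, r (i + 1) ∈ N.step (r i) (w i)) ∧ r n = q := by
  intro n
  induction n with
  | zero =>
    intro q
    simp only [List.ofFn_zero, NFA.evalFrom_nil]
    constructor
    · intro hq; exact ⟨fun _ => q, hq, fun i h => absurd h (Nat.not_lt_zero i), rfl⟩
    · rintro ⟨r, h0, _, rfl⟩; exact h0
  | succ n ih =>
    intro q
    have hlist : (List.ofFn fun i : Fin (n + 1) => w i.val)
        = (List.ofFn fun i : Fin n => w i.val) ++ [w n] := by
      rw [List.ofFn_succ']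
      simp [List.concat_eq_append]
    rw [hlist, NFA.evalFrom_append, NFA.evalFrom_singleton, NFA.mem_stepSet]
    constructor
    · rintro ⟨p, hp, hstep⟩
      obtain ⟨r, h0, hsteps, hrn⟩ := (ih p).mp hp
      refine ⟨fun i => if i = n + 1 then q else r i, by simp [h0], ?_, by simp⟩
      intro i hi
      rcases Nat.lt_succ_iff_lt_or_eq.mp hi with hi | rfl
      · have h1 : i + 1 ≠ n + 1 := by omega
        have h2 : i ≠ n + 1 := by omega
        have h3 : i ≠ n := by omega
        simpa [h1, h2, h3] using hsteps i hi
      · have h2 : i ≠ i + 1 := by omega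
        simpa [h2, hrn] using hstep
    · rintro ⟨r, h0, hsteps, rfl⟩
      exact ⟨r n, (ih (r n)).mpr ⟨r, h0, fun i hi => hsteps i (by omega), rfl⟩,
        hsteps n (by omega)⟩

lemma runVal_eq {α Q : Type} (N : NFA α Q) (l : ℕ) (hl : 2 ≤ l) (w : ℕ → α)
    (r : ℕ → Option (Option Q)) (hr0 : r 0 = none) (n : ℕ) :
    (theNDA N l hl).runVal w r n = (ndaF N (r n) : ℝ) / (l : ℝ) ^ n := by
  have hl0 : (l : ℝ) ≠ 0 := by positivity
  unfold NMDA.runVal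
  have : ∀ i ∈ Finset.range n,
      ((theNDA N l hl).weight (r i) (w i) (r (i + 1)) : ℝ) *
        ∏ j ∈ Finset.range i, (1 / ((theNDA N l hl).disc (r j) (w j) (r (j + 1)) : ℝ))
      = (fun i => (ndaF N (r i) : ℝ) / (l : ℝ) ^ i) (i + 1)
        - (fun i => (ndaF N (r i) : ℝ) / (l : ℝ) ^ i) i := by
    intro i _
    simp only [theNDA, Finset.prod_const, Finset.card_range]
    push_cast
    simp only [one_div, inv_pow]
    field_simp
    ring
  rw [Finset.sum_congr rfl this]
  have h2 := Finset.sum_range_sub (fun i => (ndaF N (r i) : ℝ) / (l : ℝ) ^ i) n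
  simp only [] at h2 ⊢
  rw [h2]
  simp [hr0, ndaF]
lemma ndaDelta_to_none {α Q : Type} (N : NFA α Q) (q : Option (Option Q)) (a : α) :
    ¬ ndaDelta N q a none := by
  rcases q with _ | (_ | s) <;> exact fun h => h

lemma ndaDelta_from_sink {α Q : Type} (N : NFA α Q) (a : α) (q' : Option (Option Q))
    (h : ndaDelta N (some none) a q') : q' = some none := by
  rcases q' with _ | (_ | p)
  · exact h.elim
  · rfl
  · exact h.elim

/-- For every integer discount factor `l ≥ 2` and every NFA `N` with `n` states, there is
an `l`-NDA with `n + 2` states whose value on every nonempty finite word `u` is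
`−1/l^|u|` if `N` accepts `u` and `1/l^|u|` otherwise; in particular, `N` accepts `u`
iff the value is negative. -/
theorem nfa_to_nda {α Q : Type} [Fintype α] [Fintype Q] (l : ℕ) (hl : 2 ≤ l)
    (N : NFA α Q) :
    ∃ (Q' : Type) (_ : Fintype Q') (At : NMDA α Q'),
      At.ConstDisc (l : ℚ) ∧
        Nat.card Q' = Nat.card Q + 2 ∧
        ∀ (w : ℕ → α) (n : ℕ), 0 < n →
          ((List.ofFn fun i : Fin n => w i.val) ∈ N.accepts →
              At.finVal w n = -(1 / (l : ℝ) ^ n)) ∧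
          ((List.ofFn fun i : Fin n => w i.val) ∉ N.accepts →
              At.finVal w n = 1 / (l : ℝ) ^ n) ∧
          ((List.ofFn fun i : Fin n => w i.val) ∈ N.accepts ↔ At.finVal w n < 0) := by
  classical
  refine ⟨Option (Option Q), inferInstance, theNDA N l hl, fun _ _ _ _ => rfl, ?_, ?_⟩
  · simp [Nat.card_eq_fintype_card]
  intro w n hn
  set A := theNDA N l hl with hA
  have hln : (0:ℝ) < (l:ℝ) ^ n := by positivity
  have hpos : (0:ℝ) < 1 / (l:ℝ) ^ n := by positivity
  set S : Set ℝ := {x : ℝ | ∃ r : ℕ → Option (Option Q), A.FinRun w n r ∧ x = A.runVal w r n}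
    with hSdef
  have hfinVal : A.finVal w n = sInf S := rfl
  have hdelta : ∀ q a q', A.delta q a q' ↔ ndaDelta N q a q' := fun _ _ _ => Iff.rfl
  -- every run starts at none
  have hstart : ∀ r : ℕ → Option (Option Q), A.FinRun w n r → r 0 = none := fun r hr => hr.1
  -- no run visits none after step 0
  have hnotnone : ∀ r : ℕ → Option (Option Q), A.FinRun w n r →
      ∀ i, i < n → r (i + 1) ≠ none := by
    intro r hr i hi hcon
    have hd := hr.2 i hi
    rw [hcon] at hd
    exact ndaDelta_to_none N (r i) (w i) hd
  -- sink is absorbing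
  have hsink : ∀ r : ℕ → Option (Option Q), A.FinRun w n r →
      ∀ i, r i = some none → ∀ j, i ≤ j → j ≤ n → r j = some none := by
    intro r hr i hi j
    induction j with
    | zero => intro h1 _; exact (Nat.le_zero.mp h1) ▸ hi
    | succ m ih =>
      intro h1 h2
      by_cases him : i ≤ m
      · have hrm := ih (by omega) (by omega)
        have hd := hr.2 m (by omega)
        rw [hrm] at hd
        exact ndaDelta_from_sink N (w m) _ hd
      · have hieq : i = m + 1 := by omega
        exact hieq ▸ hi
  -- the positive value is always attained (sink run)
  have hS1 : (1 / (l:ℝ) ^ n) ∈ S := by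
    refine ⟨fun i => if i = 0 then none else some none, ⟨rfl, ?_⟩, ?_⟩
    · intro i _
      have : i + 1 ≠ 0 := by omega
      simp only [this, if_neg]
      rcases (if i = 0 then (none : Option (Option Q)) else some none) with _ | (_ | s) <;>
        trivial
    · rw [runVal_eq N l hl w _ (by simp) n]
      have : n ≠ 0 := by omega
      simp [this, ndaF]
  -- every run value is ±1/l^n
  have hmem : ∀ x ∈ S, x = -(1 / (l:ℝ) ^ n) ∨ x = 1 / (l:ℝ) ^ n := by
    rintro x ⟨r, hr, rfl⟩
    rw [runVal_eq N l hl w r (hstart r hr) n]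
    have hne : r n ≠ none := by
      have : n = (n - 1) + 1 := by omega
      rw [this]; exact hnotnone r hr (n-1) (by omega)
    rcases h : r n with _ | (_ | q)
    · exact absurd h hne
    · right; simp [ndaF]
    · by_cases hq : q ∈ N.accept
      · left; simp [ndaF, hq]; ring
      · right; simp [ndaF, hq]
  -- acceptance iff the negative value is attained
  have hacc : (List.ofFn fun i : Fin n => w i.val) ∈ N.accepts ↔ (-(1 / (l:ℝ) ^ n)) ∈ S := by
    constructor
    · intro hu
      rw [NFA.mem_accepts] at hu
      obtain ⟨q, hqacc, hqe⟩ := hu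
      obtain ⟨r, h0, hs, hrn⟩ := (nfa_eval_iff N N.start w n q).mp hqe
      refine ⟨fun i => if i = 0 then none else some (some (r i)), ⟨rfl, ?_⟩, ?_⟩
      · intro i hi
        rcases Nat.eq_zero_or_pos i with rfl | hip
        · simp only [if_pos rfl, if_neg (by omega : (0:ℕ)+1 ≠ 0)]
          exact ⟨r 0, h0, hs 0 hn⟩
        · simp only [if_neg (by omega : i ≠ 0), if_neg (by omega : i+1 ≠ 0)]
          exact hs i hi
      · rw [runVal_eq N l hl w _ (by simp) n]
        simp only [if_neg (by omega : n ≠ 0), hrn]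
        simp [ndaF, hqacc]
        ring
    · rintro ⟨r, hr, hval⟩
      rw [runVal_eq N l hl w r (hstart r hr) n] at hval
      have hf : ndaF N (r n) = -1 := by
        have h2 := (div_eq_iff (ne_of_gt hln)).mp hval.symm
        rw [neg_mul, one_div_mul_cancel (ne_of_gt hln)] at h2
        exact_mod_cast h2
      obtain ⟨q, hq, hqacc⟩ : ∃ q, r n = some (some q) ∧ q ∈ N.accept := by
        rcases h : r n with _ | (_ | q)
        · rw [h] at hf; norm_num [ndaF] at hf
        · rw [h] at hf; norm_num [ndaF] at hf
        · refine ⟨q, rfl, ?_⟩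
          rw [h] at hf
          by_contra hc
          norm_num [ndaF, hc] at hf
      -- all intermediate states are genuine NFA states
      have hsome : ∀ i, 1 ≤ i → i ≤ n → ∃ p, r i = some (some p) := by
        intro i h1 h2
        rcases h : r i with _ | (_ | p)
        · exfalso
          have : i = (i - 1) + 1 := by omega
          exact hnotnone r hr (i-1) (by omega) (by rw [← this]; exact h)
        · exfalso
          have := hsink r hr i h n h2 le_rfl
          rw [hq] at this; simp at this
        · exact ⟨p, rfl⟩
      -- the first transition gives an initial NFA state
      obtain ⟨p1, hp1⟩ := hsome 1 le_rfl hn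
      have hd0 := hr.2 0 hn
      rw [hstart r hr, hp1] at hd0
      obtain ⟨q0, hq0, hq0s⟩ : ∃ q0 ∈ N.start, p1 ∈ N.step q0 (w 0) := hd0
      rw [NFA.mem_accepts]
      refine ⟨q, hqacc, ?_⟩
      refine (nfa_eval_iff N N.start w n q).mpr
        ⟨fun i => if i = 0 then q0 else ((r i).getD (some q0)).getD q0, by simp [hq0], ?_, ?_⟩
      · intro i hi
        rcases Nat.eq_zero_or_pos i with rfl | hip
        · simp only [if_pos rfl, if_neg (by omega : (0:ℕ)+1 ≠ 0), hp1]
          simpa using hq0s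
        · obtain ⟨p, hp⟩ := hsome i hip (by omega)
          obtain ⟨p', hp'⟩ := hsome (i+1) (by omega) (by omega)
          have hd := hr.2 i hi
          rw [hp, hp'] at hd
          simp only [if_neg (by omega : i ≠ 0), if_neg (by omega : i+1 ≠ 0), hp, hp']
          have hd' : p' ∈ N.step p (w i) := hd
          simpa using hd'
      · simp [if_neg (by omega : n ≠ 0), hq]
  refine ⟨?_, ?_, ?_⟩
  · intro hu
    have hSeq : S = {-(1 / (l:ℝ) ^ n), 1 / (l:ℝ) ^ n} := by
      apply Set.eq_of_subset_of_subset
      · intro x hx; rcases hmem x hx with h | h <;> simp [h]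
      · intro x hx
        rcases hx with rfl | rfl
        · exact hacc.mp hu
        · exact hS1
    rw [hfinVal, hSeq, csInf_pair]
    exact inf_eq_left.mpr (by linarith)
  · intro hu
    have hSeq : S = {1 / (l:ℝ) ^ n} := by
      apply Set.eq_of_subset_of_subset
      · intro x hx
        rcases hmem x hx with h | h
        · exact absurd (hacc.mpr (h ▸ hx)) hu
        · simp [h]
      · intro x hx; rcases hx with rfl; exact hS1
    rw [hfinVal, hSeq, csInf_singleton]
  · constructor
    · intro hu
      have hSeq : S = {-(1 / (l:ℝ) ^ n), 1 / (l:ℝ) ^ n} := by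
        apply Set.eq_of_subset_of_subset
        · intro x hx; rcases hmem x hx with h | h <;> simp [h]
        · intro x hx
          rcases hx with rfl | rfl
          · exact hacc.mp hu
          · exact hS1
      rw [hfinVal, hSeq, csInf_pair, inf_eq_left.mpr (by linarith)]
      simp only [neg_lt, neg_zero]
      positivity
    · intro hv
      by_contra hu
      have hSeq : S = {1 / (l:ℝ) ^ n} := by
        apply Set.eq_of_subset_of_subset
        · intro x hx
          rcases hmem x hx with h | h
          · exact absurd (hacc.mpr (h ▸ hx)) hu
          · simp [h]
        · intro x hx; rcases hx with rfl; exact hS1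
      rw [hfinVal, hSeq, csInf_singleton] at hv
      linarith
end
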